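/- arXiv:hep-th/0209169 — 14 statements merged into one kernel-verified Lean document; each statement's English description precedes it below -/
import Mathlib

section
/- Let f : ℝ × ℝ → ℝ be real-analytic at (0,0), symmetric in the sense that f(u,v) = f(v,u) for all (u,v) in a neighborhood of (0,0), satisfy the Courant–Hilbert equation (∂f/∂u)(∂f/∂v) = 1 at every point of a neighborhood of (0,0), and be normalized by the weak-field conditions f(0,0) = 0 and (∂f/∂u)(0,0) = 1. Define z(t) := f(t,0) and Ψ(t) := −t·(z′(t))². Then: (i) Ψ is real-analytic at 0; (ii) Ψ(0) = 0; (iii) Ψ′(0) = −1, so Ψ differs from the identity on every neighborhood of 0; and (iv) Ψ(Ψ(t)) = t for all t in some neighborhood of 0. -/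
set_option maxHeartbeats 1000000

open Filter Metric Set

/-- Necessity direction of the analyticity theorem for duality-symmetric
nonlinear electrodynamics: the boundary value `z t = f (t, 0)` of a symmetric,
analytic solution of the Courant–Hilbert equation with weak-field normalization
generates an analytic involution `Ψ t = -t * (z' t)^2` vanishing at the origin,
with `Ψ' 0 = -1`, hence distinct from the identity on every neighborhood of `0`. -/
theorem stmt_0 (f : ℝ × ℝ → ℝ)
    (hf : AnalyticAt ℝ f ((0, 0) : ℝ × ℝ))
    (hsym : ∀ᶠ p : ℝ × ℝ in nhds ((0, 0) : ℝ × ℝ), f p = f (p.2, p.1))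
    (hCH : ∀ᶠ p : ℝ × ℝ in nhds ((0, 0) : ℝ × ℝ),
      fderiv ℝ f p (1, 0) * fderiv ℝ f p (0, 1) = 1)
    (hf00 : f (0, 0) = 0)
    (hfu : fderiv ℝ f ((0, 0) : ℝ × ℝ) (1, 0) = 1)
    (z : ℝ → ℝ) (hz : ∀ t, z t = f (t, 0))
    (Ψ : ℝ → ℝ) (hΨ : ∀ t, Ψ t = -t * (deriv z t) ^ 2) :
    AnalyticAt ℝ Ψ 0 ∧
    Ψ 0 = 0 ∧
    (deriv Ψ 0 = -1 ∧ ∀ U ∈ nhds (0 : ℝ), ∃ t ∈ U, Ψ t ≠ t) ∧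
    ∀ᶠ t in nhds (0 : ℝ), Ψ (Ψ t) = t := by
  obtain rfl : z = fun t => f (t, 0) := funext hz
  set F : (ℝ × ℝ) → ((ℝ × ℝ) →L[ℝ] ℝ) := fderiv ℝ f with hFdef
  set p : (ℝ × ℝ) → ℝ := fun a => F a ((1, 0) : ℝ × ℝ) with hpdef
  set q : (ℝ × ℝ) → ℝ := fun a => F a ((0, 1) : ℝ × ℝ) with hqdef
  have hFan : AnalyticAt ℝ F ((0, 0) : ℝ × ℝ) := hf.fderiv
  have hp00 : p ((0, 0) : ℝ × ℝ) = 1 := hfu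
  have hpc : ContinuousAt p ((0, 0) : ℝ × ℝ) :=
    ((ContinuousLinearMap.apply ℝ ℝ ((1, 0) : ℝ × ℝ)).continuous.continuousAt).comp
      hFan.continuousAt
  have hsmall : ∀ᶠ a in nhds ((0, 0) : ℝ × ℝ), |p a - 1| < 1 / 2 := by
    have h1 : Tendsto p (nhds ((0, 0) : ℝ × ℝ)) (nhds 1) := hp00 ▸ hpc
    filter_upwards [h1 (Metric.ball_mem_nhds 1 (by norm_num : (0:ℝ) < 1/2))] with a ha
    simpa [Real.dist_eq] using ha
  -- collect all the good properties on a single metric ball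
  have hev : ∀ᶠ a in nhds ((0, 0) : ℝ × ℝ),
      AnalyticAt ℝ f a ∧ AnalyticAt ℝ F a ∧ p a * q a = 1 ∧ |p a - 1| < 1 / 2 ∧
        f a = f (a.2, a.1) :=
    hf.eventually_analyticAt.and (hFan.eventually_analyticAt.and (hCH.and (hsmall.and hsym)))
  rw [Metric.eventually_nhds_iff] at hev
  obtain ⟨ε, εpos, hP⟩ := hev
  have hdist : ∀ x y : ℝ, dist ((x, y) : ℝ × ℝ) ((0, 0) : ℝ × ℝ) = max |x| |y| := by
    intro x y
    simp [Prod.dist_eq, Real.dist_eq, Prod.norm_def, Real.norm_eq_abs]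
  -- basic consequences on the ball
  have hpbound : ∀ a : ℝ × ℝ, dist a ((0, 0) : ℝ × ℝ) < ε → 1/2 < p a ∧ p a < 3/2 := by
    intro a ha
    have := (hP ha).2.2.2.1
    rw [abs_sub_lt_iff] at this
    constructor <;> linarith [this.1, this.2]
  have hpne : ∀ a : ℝ × ℝ, dist a ((0, 0) : ℝ × ℝ) < ε → p a ≠ 0 := by
    intro a ha
    have := (hpbound a ha).1
    positivity
  have hq : ∀ a : ℝ × ℝ, dist a ((0, 0) : ℝ × ℝ) < ε → q a = (p a)⁻¹ := by
    intro a ha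
    have h1 := (hP ha).2.2.1
    rw [mul_comm] at h1
    exact eq_inv_of_mul_eq_one_left h1
  -- differentiability of p and q
  have hDp : ∀ a : ℝ × ℝ, dist a ((0, 0) : ℝ × ℝ) < ε →
      HasFDerivAt p ((fderiv ℝ F a).flip ((1, 0) : ℝ × ℝ)) a := by
    intro a ha
    have hFd : HasFDerivAt F (fderiv ℝ F a) a := (hP ha).2.1.differentiableAt.hasFDerivAt
    have := hFd.clm_apply (hasFDerivAt_const ((1, 0) : ℝ × ℝ) a)
    simpa using this
  have hDq : ∀ a : ℝ × ℝ, dist a ((0, 0) : ℝ × ℝ) < ε →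
      HasFDerivAt q ((fderiv ℝ F a).flip ((0, 1) : ℝ × ℝ)) a := by
    intro a ha
    have hFd : HasFDerivAt F (fderiv ℝ F a) a := (hP ha).2.1.differentiableAt.hasFDerivAt
    have := hFd.clm_apply (hasFDerivAt_const ((0, 1) : ℝ × ℝ) a)
    simpa using this
  have hball_nhds : ∀ a : ℝ × ℝ, dist a ((0, 0) : ℝ × ℝ) < ε →
      ∀ᶠ y in nhds a, dist y ((0, 0) : ℝ × ℝ) < ε := by
    intro a ha
    exact Metric.isOpen_ball.eventually_mem (by simpa [Metric.mem_ball] using ha)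
  -- Clairaut symmetry of the second derivative
  have hClairaut : ∀ a : ℝ × ℝ, dist a ((0, 0) : ℝ × ℝ) < ε →
      fderiv ℝ F a ((1, 0) : ℝ × ℝ) ((0, 1) : ℝ × ℝ)
        = fderiv ℝ F a ((0, 1) : ℝ × ℝ) ((1, 0) : ℝ × ℝ) := by
    intro a ha
    have hFd : HasFDerivAt F (fderiv ℝ F a) a := (hP ha).2.1.differentiableAt.hasFDerivAt
    have hev' : ∀ᶠ y in nhds a, HasFDerivAt f (F y) y := by
      filter_upwards [hball_nhds a ha] with y hy
      exact (hP hy).1.differentiableAt.hasFDerivAt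
    exact second_derivative_symmetric_of_eventually hev' hFd _ _
  -- the key PDE for p : p_v = - p_u / p^2
  have hkey : ∀ a : ℝ × ℝ, dist a ((0, 0) : ℝ × ℝ) < ε →
      (fderiv ℝ F a).flip ((1, 0) : ℝ × ℝ) ((0, 1) : ℝ × ℝ)
        = -(((p a) ^ 2)⁻¹) * (fderiv ℝ F a).flip ((1, 0) : ℝ × ℝ) ((1, 0) : ℝ × ℝ) := by
    intro a ha
    have hprod : HasFDerivAt (fun x => p x * q x)
        (p a • (fderiv ℝ F a).flip ((0, 1) : ℝ × ℝ)
          + q a • (fderiv ℝ F a).flip ((1, 0) : ℝ × ℝ)) a := (hDp a ha).mul (hDq a ha)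
    have hone : HasFDerivAt (fun _ : ℝ × ℝ => (1 : ℝ)) (0 : (ℝ × ℝ) →L[ℝ] ℝ) a :=
      hasFDerivAt_const 1 a
    have heq : (fun x => p x * q x) =ᶠ[nhds a] fun _ => (1 : ℝ) := by
      filter_upwards [hball_nhds a ha] with y hy
      exact (hP hy).2.2.1
    have hzero : HasFDerivAt (fun x => p x * q x) (0 : (ℝ × ℝ) →L[ℝ] ℝ) a :=
      hone.congr_of_eventuallyEq heq
    have huniq := hprod.unique hzero
    have h10 := congrArg (fun (L : (ℝ × ℝ) →L[ℝ] ℝ) => L ((1, 0) : ℝ × ℝ)) huniq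
    simp only [ContinuousLinearMap.add_apply, ContinuousLinearMap.coe_smul',
      Pi.smul_apply, ContinuousLinearMap.zero_apply, smul_eq_mul,
      ContinuousLinearMap.flip_apply] at h10
    -- h10 : p a * fderiv F a (1,0) (0,1) + q a * fderiv F a (1,0) (1,0) = 0
    have hC := hClairaut a ha
    have hqa := hq a ha
    have hpa := hpne a ha
    rw [hqa] at h10
    simp only [ContinuousLinearMap.flip_apply]
    rw [hC] at h10
    have harith : ∀ c x y : ℝ, c ≠ 0 → c * x + c⁻¹ * y = 0 → x = -((c ^ 2)⁻¹) * y := by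
      intro c x y hc h
      field_simp at h ⊢
      nlinarith [h]
    exact harith (p a) _ _ hpa h10
  -- symmetry of the first derivatives across the diagonal
  have hσ : ∀ a : ℝ × ℝ, dist a ((0, 0) : ℝ × ℝ) < ε →
      F a = (F (a.2, a.1)).comp
        ((ContinuousLinearMap.snd ℝ ℝ ℝ).prod (ContinuousLinearMap.fst ℝ ℝ ℝ)) := by
    intro a ha
    set σ : (ℝ × ℝ) →L[ℝ] (ℝ × ℝ) :=
      (ContinuousLinearMap.snd ℝ ℝ ℝ).prod (ContinuousLinearMap.fst ℝ ℝ ℝ) with hσdef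
    have hswap : dist ((a.2, a.1) : ℝ × ℝ) ((0, 0) : ℝ × ℝ) < ε := by
      have h1 : dist ((a.2, a.1) : ℝ × ℝ) ((0, 0) : ℝ × ℝ)
          = dist ((a.1, a.2) : ℝ × ℝ) ((0, 0) : ℝ × ℝ) := by
        rw [hdist, hdist, max_comm]
      rw [h1]
      simpa using ha
    have hσa : σ a = (a.2, a.1) := by simp [hσdef]
    have hfd : HasFDerivAt f (F (a.2, a.1)) (σ a) := by
      rw [hσa]; exact (hP hswap).1.differentiableAt.hasFDerivAt
    have hd1 : HasFDerivAt (fun x : ℝ × ℝ => f (σ x)) ((F (a.2, a.1)).comp σ) a :=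
      hfd.comp a σ.hasFDerivAt
    have heq : f =ᶠ[nhds a] fun x => f (σ x) := by
      filter_upwards [hball_nhds a ha] with y hy
      simpa [hσdef] using (hP hy).2.2.2.2
    have hF2 : HasFDerivAt f ((F (a.2, a.1)).comp σ) a := hd1.congr_of_eventuallyEq heq
    exact ((hP ha).1.differentiableAt.hasFDerivAt).unique hF2
  have hpq : ∀ v : ℝ, |v| < ε → p ((0, v) : ℝ × ℝ) = q ((v, 0) : ℝ × ℝ) := by
    intro v hv
    have hmem : dist ((0, v) : ℝ × ℝ) ((0, 0) : ℝ × ℝ) < ε := by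
      rw [hdist]; simpa [abs_nonneg] using hv
    have h1 := congrArg (fun L : (ℝ × ℝ) →L[ℝ] ℝ => L ((1, 0) : ℝ × ℝ)) (hσ (0, v) hmem)
    simpa using h1
  -- derivative of the boundary function z
  have hmemt0 : ∀ t : ℝ, |t| < ε → dist ((t, 0) : ℝ × ℝ) ((0, 0) : ℝ × ℝ) < ε := by
    intro t ht
    rw [hdist]; simpa using ht
  have hzderiv : ∀ t : ℝ, |t| < ε →
      HasDerivAt (fun t => f (t, 0)) (p ((t, 0) : ℝ × ℝ)) t := by
    intro t ht
    have hc : HasDerivAt (fun s : ℝ => ((s, 0) : ℝ × ℝ)) ((1, 0) : ℝ × ℝ) t :=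
      (hasDerivAt_id t).prodMk (hasDerivAt_const t 0)
    exact ((hP (hmemt0 t ht)).1.differentiableAt.hasFDerivAt).comp_hasDerivAt t hc
  -- the Gronwall/characteristics argument
  have hmain : ∀ t : ℝ, |t| < ε / 3 →
      p ((0, -t * (p ((t, 0) : ℝ × ℝ)) ^ 2) : ℝ × ℝ) = p ((t, 0) : ℝ × ℝ) := by
    intro t ht
    have htε : |t| < ε := by linarith [abs_nonneg t]
    have hwb := hpbound _ (hmemt0 t htε)
    set w : ℝ := p ((t, 0) : ℝ × ℝ) with hw
    have hw2 : w ^ 2 < 9 / 4 := by nlinarith [hwb.1, hwb.2]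
    set Ψt : ℝ := -t * w ^ 2 with hΨt
    have habs : |Ψt| = |t| * w ^ 2 := by
      rw [hΨt, abs_mul, abs_neg, abs_of_nonneg (sq_nonneg w)]
    have hΨtb : |Ψt| < ε := by
      rw [habs]
      nlinarith [abs_nonneg t, sq_nonneg w, εpos]
    set c : ℝ → ℝ × ℝ := fun s => ((1 - s) * t, s * Ψt) with hcdef
    have hmem : ∀ s : ℝ, s ∈ Icc (0 : ℝ) 1 → dist (c s) ((0, 0) : ℝ × ℝ) < ε := by
      intro s hs
      rw [hcdef]
      simp only []
      rw [hdist, max_lt_iff]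
      constructor
      · rw [abs_mul]
        have h1 : |1 - s| ≤ 1 := by rw [abs_le]; constructor <;> [linarith [hs.2]; linarith [hs.1]]
        nlinarith [abs_nonneg t, abs_nonneg (1 - s)]
      · rw [abs_mul]
        have h1 : |s| ≤ 1 := by rw [abs_le]; constructor <;> [linarith [hs.1]; linarith [hs.2]]
        nlinarith [abs_nonneg Ψt, abs_nonneg s]
    have hcurve : ∀ s : ℝ, HasDerivAt c ((-t, Ψt) : ℝ × ℝ) s := by
      intro s
      have h1 : HasDerivAt (fun s : ℝ => (1 - s) * t) (-t) s := by
        have := ((hasDerivAt_const s (1 : ℝ)).sub (hasDerivAt_id s)).mul_const t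
        simpa using this
      have h2 : HasDerivAt (fun s : ℝ => s * Ψt) Ψt s := by
        simpa using (hasDerivAt_id s).mul_const Ψt
      exact h1.prodMk h2
    set C : ℝ → ℝ := fun s =>
      (-t * (fderiv ℝ F (c s)).flip ((1, 0) : ℝ × ℝ) ((1, 0) : ℝ × ℝ)
        * ((p (c s)) ^ 2)⁻¹) * (p (c s) + w) with hCdef
    have hgd : ∀ s ∈ Icc (0 : ℝ) 1,
        HasDerivAt (fun s => p (c s) - w) (C s * (p (c s) - w)) s := by
      intro s hs
      have ha := hmem s hs
      have hd := (hDp (c s) ha).comp_hasDerivAt s (hcurve s)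
      have hsplit : ((-t, Ψt) : ℝ × ℝ)
          = (-t) • ((1, 0) : ℝ × ℝ) + Ψt • ((0, 1) : ℝ × ℝ) := by
        simp [Prod.ext_iff]
      have hval : (fderiv ℝ F (c s)).flip ((1, 0) : ℝ × ℝ) ((-t, Ψt) : ℝ × ℝ)
          = -t * (fderiv ℝ F (c s)).flip ((1, 0) : ℝ × ℝ) ((1, 0) : ℝ × ℝ)
            + Ψt * (fderiv ℝ F (c s)).flip ((1, 0) : ℝ × ℝ) ((0, 1) : ℝ × ℝ) := by
        rw [hsplit, map_add, map_smul, map_smul]; simp [smul_eq_mul]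
      have hkey' := hkey (c s) ha
      have hγne : p (c s) ≠ 0 := hpne (c s) ha
      have hmain : HasDerivAt (fun s => p (c s)) (C s * (p (c s) - w)) s := by
        refine hd.congr_deriv ?_
        rw [hval, hkey', hCdef]
        field_simp
        ring
      exact hmain.sub_const w
    have hcc : Continuous c := by
      rw [hcdef]; fun_prop
    have hpcont : ∀ s ∈ Icc (0 : ℝ) 1, ContinuousAt (fun s => p (c s)) s := by
      intro s hs
      exact (((ContinuousLinearMap.apply ℝ ℝ ((1, 0) : ℝ × ℝ)).continuous.continuousAt).comp
        ((hP (hmem s hs)).2.1.continuousAt)).comp hcc.continuousAt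
    have hpucont : ∀ s ∈ Icc (0 : ℝ) 1, ContinuousAt
        (fun s => (fderiv ℝ F (c s)).flip ((1, 0) : ℝ × ℝ) ((1, 0) : ℝ × ℝ)) s := by
      intro s hs
      have h1 : ContinuousAt (fderiv ℝ F) (c s) := ((hP (hmem s hs)).2.1.fderiv).continuousAt
      have h2 : Continuous (fun B : (ℝ × ℝ) →L[ℝ] ((ℝ × ℝ) →L[ℝ] ℝ) =>
          B.flip ((1, 0) : ℝ × ℝ) ((1, 0) : ℝ × ℝ)) := by
        simp only [ContinuousLinearMap.flip_apply]
        exact (ContinuousLinearMap.apply ℝ ℝ ((1, 0) : ℝ × ℝ)).continuous.comp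
          (ContinuousLinearMap.apply ℝ ((ℝ × ℝ) →L[ℝ] ℝ) ((1, 0) : ℝ × ℝ)).continuous
      exact h2.continuousAt.comp (h1.comp hcc.continuousAt)
    have hCcont : ContinuousOn C (Icc (0 : ℝ) 1) := by
      intro s hs
      refine ContinuousAt.continuousWithinAt ?_
      rw [hCdef]
      exact ((continuousAt_const.mul (hpucont s hs)).mul
        (((hpcont s hs).pow 2).inv₀ (pow_ne_zero 2 (hpne (c s) (hmem s hs))))).mul
        ((hpcont s hs).add continuousAt_const)
    obtain ⟨K, hK⟩ := IsCompact.exists_bound_of_continuousOn isCompact_Icc hCcont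
    have hgcont : ContinuousOn (fun s => p (c s) - w) (Icc (0 : ℝ) 1) := by
      intro s hs
      exact ((hpcont s hs).sub continuousAt_const).continuousWithinAt
    have hg0 : p (c 0) - w = 0 := by
      have : c 0 = ((t, 0) : ℝ × ℝ) := by rw [hcdef]; norm_num
      rw [this, ← hw]; ring
    have hgron := norm_le_gronwallBound_of_norm_deriv_right_le (δ := 0) (K := K) (ε := 0)
      hgcont
      (fun s hs => (hgd s (Ico_subset_Icc_self hs)).hasDerivWithinAt)
      (by rw [hg0]; simp)
      (fun s hs => by
        rw [norm_mul]
        have := hK s (Ico_subset_Icc_self hs)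
        have h2 := mul_le_mul_of_nonneg_right this (norm_nonneg (p (c s) - w))
        simpa using h2)
    have hfin := hgron 1 (by constructor <;> norm_num)
    rw [gronwallBound_ε0_δ0] at hfin
    have hc1 : c 1 = ((0, Ψt) : ℝ × ℝ) := by rw [hcdef]; norm_num
    have : p (c 1) - w = 0 := by
      have := norm_le_zero_iff.1 hfin
      exact this
    rw [hc1] at this
    rw [hΨt] at this ⊢
    linarith [this]
  -- assembling the four claims
  have hev3 : ∀ᶠ t : ℝ in nhds 0, |t| < ε / 3 := by
    filter_upwards [Metric.ball_mem_nhds (0 : ℝ) (by positivity : (0:ℝ) < ε / 3)] with t ht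
    simpa [Real.dist_eq] using ht
  have hevε : ∀ᶠ t : ℝ in nhds 0, |t| < ε := by
    filter_upwards [Metric.ball_mem_nhds (0 : ℝ) εpos] with t ht
    simpa [Real.dist_eq] using ht
  have hΨeq : Ψ =ᶠ[nhds 0] fun t => -t * (p ((t, 0) : ℝ × ℝ)) ^ 2 := by
    filter_upwards [hevε] with t ht
    rw [hΨ t, (hzderiv t ht).deriv]
  have hh : AnalyticAt ℝ (fun t : ℝ => p ((t, 0) : ℝ × ℝ)) 0 := by
    have h1 : AnalyticAt ℝ (fun t : ℝ => ((t, (0 : ℝ)) : ℝ × ℝ)) 0 :=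
      analyticAt_id.prod analyticAt_const
    have hcomp : AnalyticAt ℝ (fun t : ℝ => F ((t, (0 : ℝ)) : ℝ × ℝ)) 0 :=
      AnalyticAt.comp (g := F) (f := fun t : ℝ => ((t, (0 : ℝ)) : ℝ × ℝ)) (x := 0) hFan h1
    exact ((ContinuousLinearMap.apply ℝ ℝ ((1, 0) : ℝ × ℝ)).analyticAt _).comp hcomp
  refine ⟨?_, ?_, ⟨?_, ?_⟩, ?_⟩
  · exact ((analyticAt_id.neg.mul (hh.pow 2))).congr hΨeq.symm
  · rw [hΨ]; ring
  · have hd : HasDerivAt (fun t : ℝ => -t * (p ((t, 0) : ℝ × ℝ)) ^ 2) (-1) 0 := by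
      have hdh : HasDerivAt (fun t : ℝ => p ((t, 0) : ℝ × ℝ))
          (deriv (fun t : ℝ => p ((t, 0) : ℝ × ℝ)) 0) 0 :=
        hh.differentiableAt.hasDerivAt
      have h1 : HasDerivAt (fun t : ℝ => -t) (-1) 0 := (hasDerivAt_id 0).neg
      have h2 := h1.mul (hdh.pow 2)
      refine h2.congr_deriv ?_
      simp [show p ((0 : ℝ × ℝ)) = 1 from hp00, show p (((0 : ℝ), (0 : ℝ)) : ℝ × ℝ) = 1 from hp00]
    rw [hΨeq.deriv_eq]
    exact hd.deriv
  · intro U hU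
    obtain ⟨r, hr, hrU⟩ := Metric.mem_nhds_iff.1 hU
    refine ⟨r / 2, hrU (by
      simp only [Metric.mem_ball, Real.dist_eq, sub_zero]
      rw [abs_of_pos (by linarith : (0:ℝ) < r / 2)]
      linarith), ?_⟩
    intro hcon
    rw [hΨ] at hcon
    nlinarith [sq_nonneg (deriv (fun t => f (t, 0)) (r / 2)), hr]
  · filter_upwards [hev3] with t ht
    have htε : |t| < ε := by linarith [abs_nonneg t]
    have hdz : deriv (fun t => f (t, 0)) t = p ((t, 0) : ℝ × ℝ) := (hzderiv t htε).deriv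
    have hwb := hpbound _ (hmemt0 t htε)
    have hΨteq : Ψ t = -t * (p ((t, 0) : ℝ × ℝ)) ^ 2 := by rw [hΨ, hdz]
    have hp2 : (p ((t, 0) : ℝ × ℝ)) ^ 2 < 9 / 4 := by nlinarith [hwb.1, hwb.2]
    have hΨtsmall : |Ψ t| < ε := by
      rw [hΨteq, abs_mul, abs_neg, abs_of_nonneg (sq_nonneg (p ((t, 0) : ℝ × ℝ)))]
      nlinarith [abs_nonneg t, sq_nonneg (p ((t, 0) : ℝ × ℝ)), εpos]
    have h1 : p ((0, Ψ t) : ℝ × ℝ) = p ((t, 0) : ℝ × ℝ) := by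
      rw [hΨteq]; exact hmain t ht
    have h2 : p ((0, Ψ t) : ℝ × ℝ) = q ((Ψ t, 0) : ℝ × ℝ) := hpq (Ψ t) hΨtsmall
    have h3 : q ((Ψ t, 0) : ℝ × ℝ) = (p ((Ψ t, 0) : ℝ × ℝ))⁻¹ :=
      hq _ (hmemt0 (Ψ t) hΨtsmall)
    have h4 : (p ((Ψ t, 0) : ℝ × ℝ))⁻¹ = p ((t, 0) : ℝ × ℝ) := by
      rw [← h3, ← h2, h1]
    have hwne : p ((t, 0) : ℝ × ℝ) ≠ 0 := hpne _ (hmemt0 t htε)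
    have h5 : p ((Ψ t, 0) : ℝ × ℝ) = (p ((t, 0) : ℝ × ℝ))⁻¹ := by
      rw [← h4, inv_inv]
    rw [hΨ (Ψ t), (hzderiv (Ψ t) hΨtsmall).deriv, h5, hΨteq]
    field_simp
    try ring
end

section
/- Let z : ℝ → ℝ be real-analytic at 0 with z(0) = 0 and z′(0) = 1, and suppose the function Ψ(t) := −t·(z′(t))² satisfies Ψ(Ψ(t)) = t for all t in some neighborhood of 0. Then there exist functions g : ℝ × ℝ → ℝ and f : ℝ × ℝ → ℝ, both real-analytic at (0,0), and a neighborhood U of (0,0), such that for all (u,v) ∈ U: (i) g(0,0) = 0 and v = u/(z′(g(u,v)))² + g(u,v); (ii) f(u,v) = 2u/z′(g(u,v)) + z(g(u,v)); (iii) f(u,v) = f(v,u); (iv) f satisfies the Courant–Hilbert equation (∂f/∂u)(∂f/∂v) = 1 on U; (v) f(0,v) = z(v) for all v near 0; and (vi) f(0,0) = 0 and (∂f/∂u)(0,0) = (∂f/∂v)(0,0) = 1. -/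
open Filter Topology

private lemma analyticAt_deriv' {w : ℝ → ℝ} {x : ℝ} (h : AnalyticAt ℝ w x) :
    AnalyticAt ℝ (deriv w) x := by
  have h2 : AnalyticAt ℝ (fun t => fderiv ℝ w t 1) x :=
    ((ContinuousLinearMap.apply ℝ ℝ (1:ℝ)).analyticAt _).comp h.fderiv
  exact h2

private noncomputable def shearE : (ℝ × ℝ) ≃L[ℝ] (ℝ × ℝ) :=
  { toFun := fun p => (p.1, p.1 + p.2)
    invFun := fun p => (p.1, p.2 - p.1)
    map_add' := by intro a b; simp [Prod.ext_iff]; ring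
    map_smul' := by intro m a; simp [Prod.ext_iff]; ring
    left_inv := by intro p; simp
    right_inv := by intro p; simp
    continuous_toFun := by fun_prop
    continuous_invFun := by fun_prop }

private lemma shearE_apply (p : ℝ × ℝ) : shearE p = (p.1, p.1 + p.2) := rfl


/-- Sufficiency direction of the analyticity theorem: an analytic boundary
function `z` with `z 0 = 0`, `z' 0 = 1`, whose associated map
`Ψ t = -t * (z' t)^2` is a local involution, produces (via the Courant–Hilbert
general solution `f = 2u/z'(t) + z(t)`, `v = u/z'(t)^2 + t`) a symmetric
analytic solution `f` of the Courant–Hilbert equation with the weak-field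
behavior `f(0,0) = 0`, `∂f/∂u(0,0) = ∂f/∂v(0,0) = 1` and `f(0,v) = z(v)`. -/
theorem stmt_1 (z : ℝ → ℝ) (hz : AnalyticAt ℝ z 0) (hz0 : z 0 = 0)
    (hz1 : deriv z 0 = 1)
    (Ψ : ℝ → ℝ) (hΨ : ∀ t, Ψ t = -t * (deriv z t) ^ 2)
    (hinv : ∀ᶠ t in nhds (0 : ℝ), Ψ (Ψ t) = t) :
    ∃ g f : ℝ × ℝ → ℝ,
      AnalyticAt ℝ g ((0, 0) : ℝ × ℝ) ∧ AnalyticAt ℝ f ((0, 0) : ℝ × ℝ) ∧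
      g (0, 0) = 0 ∧
      ∃ U ∈ nhds ((0, 0) : ℝ × ℝ),
        (∀ p ∈ U,
          p.2 = p.1 / (deriv z (g p)) ^ 2 + g p ∧
          f p = 2 * p.1 / deriv z (g p) + z (g p) ∧
          f p = f (p.2, p.1) ∧
          fderiv ℝ f p (1, 0) * fderiv ℝ f p (0, 1) = 1) ∧
        (∀ᶠ v in nhds (0 : ℝ), f (0, v) = z v) ∧
        f (0, 0) = 0 ∧
        fderiv ℝ f ((0, 0) : ℝ × ℝ) (1, 0) = 1 ∧
        fderiv ℝ f ((0, 0) : ℝ × ℝ) (0, 1) = 1 := by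
  set c := deriv z with hcdef
  have hc : AnalyticAt ℝ c 0 := by
    have h2 : AnalyticAt ℝ (fun t => fderiv ℝ z t 1) 0 :=
      ((ContinuousLinearMap.apply ℝ ℝ (1:ℝ)).analyticAt _).comp hz.fderiv
    exact h2
  have hc0 : c 0 = 1 := hz1
  have hΨ0 : Ψ 0 = 0 := by rw [hΨ]; ring
  have hΨc : ContinuousAt Ψ 0 := by
    have h : ContinuousAt (fun t => -t * (c t)^2) 0 :=
      (continuousAt_id.neg.mul (hc.continuousAt.pow 2))
    rw [show Ψ = fun t => -t * c t ^ 2 from funext hΨ]; exact h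
  -- c (Ψ t) * c t = 1 near 0
  have hcΨc : ContinuousAt (fun t => c (Ψ t)) 0 := by
    have : ContinuousAt c (Ψ 0) := by rw [hΨ0]; exact hc.continuousAt
    exact this.comp hΨc
  have hQpos : ∀ᶠ t in 𝓝 (0:ℝ), 0 < c (Ψ t) * c t := by
    have hcont : ContinuousAt (fun t => c (Ψ t) * c t) 0 := hcΨc.mul hc.continuousAt
    have h1 : (0:ℝ) < c (Ψ 0) * c 0 := by rw [hΨ0, hc0]; norm_num
    exact hcont.eventually (eventually_gt_nhds h1)
  have hQ : ∀ᶠ t in 𝓝 (0:ℝ), c (Ψ t) * c t = 1 := by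
    filter_upwards [hQpos, hinv] with t h1 h2
    rcases eq_or_ne t 0 with rfl | h0
    · rw [hΨ0, hc0]; norm_num
    · have e1 : Ψ t = -t * c t ^ 2 := hΨ t
      have e2 : Ψ (Ψ t) = -Ψ t * c (Ψ t) ^ 2 := hΨ (Ψ t)
      rw [h2] at e2
      have h3 : t * ((c (Ψ t) * c t)^2 - 1) = 0 := by
        linear_combination c (Ψ t)^2 * e1 - e2
      rcases mul_eq_zero.1 h3 with h | h
      · exact absurd h h0
      · have h4 : (c (Ψ t) * c t - 1) * (c (Ψ t) * c t + 1) = 0 := by linear_combination h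
        rcases mul_eq_zero.1 h4 with h5 | h5
        · linarith
        · linarith
  -- bundle of scalar eventual facts
  -- key identity
  have hkey : ∀ᶠ t in 𝓝 (0:ℝ), z (Ψ t) = z t - 2 * t * c t := by
    have hzΨ : ∀ᶠ t in 𝓝 (0:ℝ), AnalyticAt ℝ z (Ψ t) := by
      have h0 : ∀ᶠ s in 𝓝 (Ψ 0), AnalyticAt ℝ z s := by rw [hΨ0]; exact hz.eventually_analyticAt
      exact hΨc.eventually h0
    have hcne : ∀ᶠ t in 𝓝 (0:ℝ), c t ≠ 0 := hc.continuousAt.eventually_ne (by rw [hc0]; norm_num)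
    obtain ⟨ε, hεpos, hball⟩ := Metric.eventually_nhds_iff_ball.mp
      ((hz.eventually_analyticAt.and hc.eventually_analyticAt).and ((hzΨ.and hcne).and hQ))
    set k : ℝ → ℝ := fun t => z (Ψ t) - z t + 2 * t * c t with hkdef
    have hkd : ∀ t ∈ Metric.ball (0:ℝ) ε, HasDerivAt k 0 t := by
      intro t ht
      obtain ⟨⟨hzt, hct⟩, ⟨hzΨt, hctne⟩, hQt⟩ := hball t ht
      have hcΨne : c (Ψ t) ≠ 0 := left_ne_zero_of_mul_eq_one hQt
      have hcΨeq : c (Ψ t) = (c t)⁻¹ := eq_inv_of_mul_eq_one_left hQt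
      have h1 : HasDerivAt z (c t) t := hzt.differentiableAt.hasDerivAt
      have h2 : HasDerivAt c (deriv c t) t := hct.differentiableAt.hasDerivAt
      have h3 : HasDerivAt Ψ (-(c t)^2 - 2 * t * c t * deriv c t) t := by
        rw [show Ψ = fun t => -t * c t ^ 2 from funext hΨ]
        have := ((hasDerivAt_id t).neg.mul (h2.pow 2))
        exact this.congr_deriv (by simp only [Pi.pow_apply, Pi.neg_apply, id_eq]; norm_num; ring)
      have h4 : HasDerivAt z (c (Ψ t)) (Ψ t) := hzΨt.differentiableAt.hasDerivAt
      have h5 : HasDerivAt (fun t => z (Ψ t)) (c (Ψ t) * (-(c t)^2 - 2 * t * c t * deriv c t)) t :=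
        h4.comp t h3
      have h6 : HasDerivAt k (c (Ψ t) * (-(c t)^2 - 2 * t * c t * deriv c t) - c t
          + (2 * c t + 2 * t * deriv c t)) t := by
        apply (h5.sub h1).add
        have := ((hasDerivAt_id t).const_mul 2).mul h2
        exact this.congr_deriv (by simp)
      convert h6 using 1
      rw [hcΨeq]
      field_simp
      ring
    have hk0 : k 0 = 0 := by simp [hkdef, hΨ0, hz0]
    have hconst : ∀ t ∈ Metric.ball (0:ℝ) ε, k t = 0 := by
      intro t ht
      have h0ball : (0:ℝ) ∈ Metric.ball (0:ℝ) ε := Metric.mem_ball_self hεpos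
      have := (convex_ball (0:ℝ) ε).is_const_of_fderivWithin_eq_zero
        (fun s hs => ((hkd s hs).differentiableAt.differentiableWithinAt))
        (fun s hs => by
          rw [fderivWithin_of_isOpen Metric.isOpen_ball hs]
          have := (hkd s hs).hasFDerivAt.fderiv
          rw [this]; ext; simp) ht h0ball
      rw [hk0] at this; exact this
    exact Metric.eventually_nhds_iff_ball.mpr ⟨ε, hεpos, fun t ht => by
      have := hconst t ht; rw [hkdef] at this; simp at this; linarith [this]⟩
  -- the function φ = 1/c
  set φ : ℝ → ℝ := fun t => (c t)⁻¹ with hφdef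
  have hφ : AnalyticAt ℝ φ 0 := hc.inv (by rw [hc0]; norm_num)
  have hφ0 : φ 0 = 1 := by rw [hφdef]; simp [hc0]
  -- the map H
  set H : ℝ × ℝ → ℝ × ℝ := fun q => (q.1, q.1 * (φ q.2 * φ q.2) + q.2) with hHdef
  have hH00 : H (0, 0) = (0, 0) := by simp [hHdef]
  have hφsnd : AnalyticAt ℝ (fun p : ℝ × ℝ => φ p.2) ((0,0) : ℝ × ℝ) :=
    (show AnalyticAt ℝ φ (((0,0) : ℝ × ℝ).2) from hφ).comp analyticAt_snd
  have hHanal : AnalyticAt ℝ H ((0,0) : ℝ × ℝ) := by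
    apply AnalyticAt.prod analyticAt_fst
    exact (analyticAt_fst.mul (hφsnd.mul hφsnd)).add analyticAt_snd
  -- derivative of H at a point
  have hHd : ∀ q : ℝ × ℝ, AnalyticAt ℝ φ q.2 →
      HasFDerivAt H ((ContinuousLinearMap.fst ℝ ℝ ℝ).prod
        ((φ q.2 * φ q.2) • (ContinuousLinearMap.fst ℝ ℝ ℝ) +
         (2 * q.1 * φ q.2 * deriv φ q.2 + 1) • (ContinuousLinearMap.snd ℝ ℝ ℝ))) q := by
    rintro ⟨u, t⟩ hφt
    have h1 : HasDerivAt φ (deriv φ t) t := hφt.differentiableAt.hasDerivAt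
    have h2 : HasFDerivAt (fun q : ℝ × ℝ => φ q.2)
        ((deriv φ t) • ContinuousLinearMap.snd ℝ ℝ ℝ) (u, t) :=
      HasDerivAt.comp_hasFDerivAt (f := fun q : ℝ × ℝ => q.2) (u, t) h1 hasFDerivAt_snd
    have h5 := (hasFDerivAt_fst.mul (h2.mul h2)).add hasFDerivAt_snd
    have h6 := HasFDerivAt.prodMk hasFDerivAt_fst h5
    rw [hHdef]
    apply h6.congr_fderiv
    refine ContinuousLinearMap.ext fun v => ?_
    refine Prod.ext ?_ ?_ <;> simp <;> ring
  have hD0 : fderiv ℝ H ((0,0) : ℝ × ℝ) = (shearE : (ℝ × ℝ) →L[ℝ] (ℝ × ℝ)) := by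
    have := (hHd (0,0) (show AnalyticAt ℝ φ (((0,0) : ℝ × ℝ).2) from hφ)).fderiv
    rw [this]
    refine ContinuousLinearMap.ext fun v => ?_
    refine Prod.ext ?_ ?_ <;> simp [shearE_apply, hφ0]
  have hstrict : HasStrictFDerivAt H (shearE : (ℝ × ℝ) →L[ℝ] (ℝ × ℝ)) ((0,0) : ℝ × ℝ) := by
    have := hHanal.hasStrictFDerivAt
    rwa [hD0] at this
  set Hloc := hstrict.toOpenPartialHomeomorph H with hHloc
  have Hcoe : ⇑Hloc = H := hstrict.toOpenPartialHomeomorph_coe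
  have hsrc0 : ((0,0) : ℝ × ℝ) ∈ Hloc.source := hstrict.mem_toOpenPartialHomeomorph_source
  have htgt0 : ((0,0) : ℝ × ℝ) ∈ Hloc.target := by
    have := hstrict.image_mem_toOpenPartialHomeomorph_target
    rwa [hH00] at this
  have hsymm00 : Hloc.symm (0, 0) = ((0,0) : ℝ × ℝ) := by
    have := Hloc.left_inv hsrc0
    rwa [Hcoe, hH00] at this
  set g : ℝ × ℝ → ℝ := fun p => (Hloc.symm p).2 with hgdef
  have hsymm_anal : AnalyticAt ℝ Hloc.symm ((0,0) : ℝ × ℝ) := by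
    apply Hloc.analyticAt_symm (i := shearE) htgt0 ?_ ?_
    · rw [hsymm00, Hcoe]; exact hHanal
    · rw [hsymm00, Hcoe]; exact hD0
  have hganal : AnalyticAt ℝ g ((0,0) : ℝ × ℝ) := analyticAt_snd.comp hsymm_anal
  have hg00 : g (0, 0) = 0 := by simp only [hgdef]; rw [hsymm00]
  set f : ℝ × ℝ → ℝ := fun p => 2 * p.1 / c (g p) + z (g p) with hfdef
  have hcg : AnalyticAt ℝ (fun p => c (g p)) ((0,0) : ℝ × ℝ) := by
    have : AnalyticAt ℝ c (g (0,0)) := by rw [hg00]; exact hc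
    exact this.comp hganal
  have hcg0 : c (g (0,0)) = 1 := by rw [hg00, hc0]
  have hfanal : AnalyticAt ℝ f ((0,0) : ℝ × ℝ) := by
    apply AnalyticAt.add
    · exact (analyticAt_const.mul analyticAt_fst).div hcg (by rw [hcg0]; norm_num)
    · have : AnalyticAt ℝ z (g (0,0)) := by rw [hg00]; exact hz
      exact this.comp hganal
  -- scalar eventual bundle
  have hT : ∀ᶠ t in 𝓝 (0:ℝ), (AnalyticAt ℝ z t ∧ AnalyticAt ℝ φ t) ∧
      (c t ≠ 0 ∧ c (Ψ t) * c t = 1) ∧ z (Ψ t) = z t - 2 * t * c t := by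
    have hcne : ∀ᶠ t in 𝓝 (0:ℝ), c t ≠ 0 := hc.continuousAt.eventually_ne (by rw [hc0]; norm_num)
    exact (hz.eventually_analyticAt.and hφ.eventually_analyticAt).and ((hcne.and hQ).and hkey)
  -- continuity of g at (0,0), retargeted
  have hgc : Tendsto g (𝓝 ((0,0) : ℝ × ℝ)) (𝓝 (0:ℝ)) := by
    have := hganal.continuousAt
    rwa [ContinuousAt, hg00] at this
  -- conditions defining U
  have hU1 : ∀ᶠ p : ℝ × ℝ in 𝓝 (0,0), p ∈ Hloc.target :=
    Hloc.open_target.mem_nhds htgt0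
  have hU2 : ∀ᶠ p : ℝ × ℝ in 𝓝 (0,0), (p.2, p.1) ∈ Hloc.target := by
    have hswap : Tendsto (fun p : ℝ × ℝ => (p.2, p.1)) (𝓝 ((0,0) : ℝ × ℝ))
        (𝓝 ((0,0) : ℝ × ℝ)) := by
      have : ContinuousAt (fun p : ℝ × ℝ => (p.2, p.1)) ((0,0) : ℝ × ℝ) :=
        (continuous_snd.prodMk continuous_fst).continuousAt
      exact this
    exact hswap.eventually hU1
  have hU3 : ∀ᶠ p : ℝ × ℝ in 𝓝 (0,0), (AnalyticAt ℝ z (g p) ∧ AnalyticAt ℝ φ (g p)) ∧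
      (c (g p) ≠ 0 ∧ c (Ψ (g p)) * c (g p) = 1) ∧
      z (Ψ (g p)) = z (g p) - 2 * (g p) * c (g p) := hgc.eventually hT
  have hU4 : ∀ᶠ p : ℝ × ℝ in 𝓝 (0,0), (p.2, Ψ (g p)) ∈ Hloc.source := by
    have h1 : Tendsto (fun p : ℝ × ℝ => (p.2, Ψ (g p))) (𝓝 ((0,0) : ℝ × ℝ))
        (𝓝 ((0,0) : ℝ × ℝ)) := by
      have h2 : Tendsto (fun p : ℝ × ℝ => Ψ (g p)) (𝓝 ((0,0) : ℝ × ℝ)) (𝓝 (0:ℝ)) := by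
        have := hΨc.tendsto
        rw [hΨ0] at this
        exact this.comp hgc
      have h3 : Tendsto (fun p : ℝ × ℝ => p.2) (𝓝 ((0,0) : ℝ × ℝ)) (𝓝 (0:ℝ)) :=
        continuousAt_snd
      exact h3.prodMk_nhds h2
    exact h1.eventually (Hloc.open_source.mem_nhds hsrc0)
  have hU5 : ∀ᶠ p : ℝ × ℝ in 𝓝 (0,0), AnalyticAt ℝ f p := hfanal.eventually_analyticAt
  have hU6 : ∀ᶠ p : ℝ × ℝ in 𝓝 (0,0), 2 * p.1 * φ (g p) * deriv φ (g p) + 1 ≠ 0 := by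
    have hcont : Tendsto (fun p : ℝ × ℝ => 2 * p.1 * φ (g p) * deriv φ (g p) + 1)
        (𝓝 ((0,0) : ℝ × ℝ)) (𝓝 (2 * 0 * φ 0 * deriv φ 0 + 1)) := by
      have hφc : Tendsto (fun p : ℝ × ℝ => φ (g p)) (𝓝 ((0,0) : ℝ × ℝ)) (𝓝 (φ 0)) :=
        (hφ.continuousAt.tendsto).comp hgc
      have hφ'c : Tendsto (fun p : ℝ × ℝ => deriv φ (g p)) (𝓝 ((0,0) : ℝ × ℝ))
          (𝓝 (deriv φ 0)) := ((analyticAt_deriv' hφ).continuousAt.tendsto).comp hgc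
      exact ((((tendsto_const_nhds.mul continuousAt_fst).mul hφc).mul hφ'c).add
        tendsto_const_nhds)
    exact hcont.eventually_ne (by norm_num)
  -- main pointwise work
  have hmain : ∀ p : ℝ × ℝ, p ∈ Hloc.target → (p.2, p.1) ∈ Hloc.target →
      ((AnalyticAt ℝ z (g p) ∧ AnalyticAt ℝ φ (g p)) ∧
        (c (g p) ≠ 0 ∧ c (Ψ (g p)) * c (g p) = 1) ∧
        z (Ψ (g p)) = z (g p) - 2 * (g p) * c (g p)) →
      (p.2, Ψ (g p)) ∈ Hloc.source → AnalyticAt ℝ f p →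
      2 * p.1 * φ (g p) * deriv φ (g p) + 1 ≠ 0 →
      p.2 = p.1 / (c (g p))^2 + g p ∧ f p = f (p.2, p.1) ∧
      fderiv ℝ f p (1, 0) = φ (g p) ∧ fderiv ℝ f p (0, 1) = c (g p) := by
    intro p hp1 hp2 hp3 hp4 hp5 hp6
    obtain ⟨⟨hzt, hφt⟩, ⟨hct, hQt⟩, hzkey⟩ := hp3
    have hri : H (Hloc.symm p) = p := by have := Hloc.right_inv hp1; rwa [Hcoe] at this
    have h1st : (Hloc.symm p).1 = p.1 := by
      have := congrArg Prod.fst hri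
      simpa only [hHdef] using this
    have hsymm_eq : Hloc.symm p = (p.1, g p) := Prod.ext h1st rfl
    have hri' : H (p.1, g p) = p := by rw [← hsymm_eq]; exact hri
    have hBcoord : p.1 * (φ (g p) * φ (g p)) + g p = p.2 := by
      have := congrArg Prod.snd hri'
      simpa only [hHdef] using this
    have hφc1 : φ (g p) * c (g p) = 1 := by
      simp only [hφdef]; exact inv_mul_cancel₀ hct
    simp only [hφdef] at hBcoord
    have hB2 : p.1 = (p.2 - g p) * (c (g p))^2 := by
      rw [← hBcoord]; field_simp; ring
    have hcΨ : c (Ψ (g p)) = (c (g p))⁻¹ := eq_inv_of_mul_eq_one_left hQt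
    have hΨval : Ψ (g p) = -(g p) * (c (g p))^2 := hΨ (g p)
    have hφΨ : φ (Ψ (g p)) = c (g p) := by
      simp only [hφdef]; rw [hcΨ, inv_inv]
    have hderivs : fderiv ℝ f p (1, 0) = φ (g p) ∧ fderiv ℝ f p (0, 1) = c (g p) := by
      -- derivative computations
      have hq_src : (p.1, g p) ∈ Hloc.source := by rw [← hsymm_eq]; exact Hloc.map_target hp1
      have hDH := hHd (p.1, g p) hφt
      dsimp only at hDH
      set a : ℝ := φ (g p) * φ (g p) with hadef
      set b : ℝ := 2 * p.1 * φ (g p) * deriv φ (g p) + 1 with hbdef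
      have hfD' : HasFDerivAt f (fderiv ℝ f p) (H (p.1, g p)) := by
        rw [hri']; exact hp5.differentiableAt.hasFDerivAt
      have hchain := hfD'.comp (p.1, g p) hDH
      have heeq : (fun q' : ℝ × ℝ => 2 * q'.1 * φ q'.2 + z q'.2) =ᶠ[𝓝 (p.1, g p)]
          (f ∘ H) := by
        filter_upwards [Hloc.open_source.mem_nhds hq_src] with q' hq'
        have hli : Hloc.symm (H q') = q' := by
          have := Hloc.left_inv hq'; rwa [Hcoe] at this
        have hgH : g (H q') = q'.2 := by simp only [hgdef]; rw [hli]
        show 2 * q'.1 * φ q'.2 + z q'.2 = f (H q')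
        have hfst : (H q').1 = q'.1 := rfl
        simp only [hfdef]
        rw [hgH, hfst, hφdef, div_eq_mul_inv]
      have hzd : HasDerivAt z (c (g p)) (g p) := hzt.differentiableAt.hasDerivAt
      have hφd : HasDerivAt φ (deriv φ (g p)) (g p) := hφt.differentiableAt.hasDerivAt
      have hφsnd' : HasFDerivAt (fun q' : ℝ × ℝ => φ q'.2)
          ((deriv φ (g p)) • ContinuousLinearMap.snd ℝ ℝ ℝ) (p.1, g p) :=
        HasDerivAt.comp_hasFDerivAt (f := fun q' : ℝ × ℝ => q'.2) (p.1, g p) hφd hasFDerivAt_snd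
      have hzsnd : HasFDerivAt (fun q' : ℝ × ℝ => z q'.2)
          ((c (g p)) • ContinuousLinearMap.snd ℝ ℝ ℝ) (p.1, g p) :=
        HasDerivAt.comp_hasFDerivAt (f := fun q' : ℝ × ℝ => q'.2) (p.1, g p) hzd hasFDerivAt_snd
      have hFd : HasFDerivAt (fun q' : ℝ × ℝ => 2 * q'.1 * φ q'.2 + z q'.2)
          ((2 * φ (g p)) • ContinuousLinearMap.fst ℝ ℝ ℝ +
           (2 * p.1 * deriv φ (g p) + c (g p)) • ContinuousLinearMap.snd ℝ ℝ ℝ) (p.1, g p) := by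
        have h7 := ((hasFDerivAt_fst.const_mul (2:ℝ)).mul hφsnd').add hzsnd
        apply h7.congr_fderiv
        refine ContinuousLinearMap.ext fun v => ?_
        simp
        ring
      have huniq := (hchain.congr_of_eventuallyEq heeq).unique hFd
      have hkey2 : (2 * p.1 * deriv φ (g p) + c (g p)) * a = φ (g p) * b := by
        rw [hadef, hbdef]; linear_combination (φ (g p)) * hφc1
      have hkey3 : 2 * p.1 * deriv φ (g p) + c (g p) = c (g p) * b := by
        rw [hbdef]; linear_combination (-(2 * p.1 * deriv φ (g p))) * hφc1
      refine ⟨?_, ?_⟩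
      · -- ∂u
          have hvec1 : ((ContinuousLinearMap.fst ℝ ℝ ℝ).prod
              (a • (ContinuousLinearMap.fst ℝ ℝ ℝ) + b • (ContinuousLinearMap.snd ℝ ℝ ℝ)))
              ((1 : ℝ), -(a/b)) = ((1 : ℝ), (0 : ℝ)) := by
            refine Prod.ext ?_ ?_
            · simp
            · show a * 1 + b * (-(a/b)) = 0
              field_simp
              ring
          have h1 := congrArg (fun L : (ℝ × ℝ) →L[ℝ] ℝ => L (1, -(a/b))) huniq
          simp only [ContinuousLinearMap.comp_apply] at h1
          rw [hvec1] at h1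
          rw [h1]
          show 2 * φ (g p) * 1 + (2 * p.1 * deriv φ (g p) + c (g p)) * (-(a/b)) = φ (g p)
          have h9 : (2 * p.1 * deriv φ (g p) + c (g p)) * (a/b) = φ (g p) := by
            rw [← mul_div_assoc, hkey2, mul_div_cancel_right₀ _ hp6]
          linear_combination -h9
      · -- ∂v
          have hvec2 : ((ContinuousLinearMap.fst ℝ ℝ ℝ).prod
              (a • (ContinuousLinearMap.fst ℝ ℝ ℝ) + b • (ContinuousLinearMap.snd ℝ ℝ ℝ)))
              ((0 : ℝ), 1/b) = ((0 : ℝ), (1 : ℝ)) := by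
            refine Prod.ext ?_ ?_
            · simp
            · show a * 0 + b * (1/b) = 1
              field_simp
              ring
          have h1 := congrArg (fun L : (ℝ × ℝ) →L[ℝ] ℝ => L (0, 1/b)) huniq
          simp only [ContinuousLinearMap.comp_apply] at h1
          rw [hvec2] at h1
          rw [h1]
          show 2 * φ (g p) * 0 + (2 * p.1 * deriv φ (g p) + c (g p)) * (1/b) = c (g p)
          rw [mul_one_div, hkey3, mul_div_cancel_right₀ _ hp6]
          ring
    refine ⟨?_, ?_, hderivs.1, hderivs.2⟩
    · -- defining relation
      rw [hB2]; field_simp; ring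
    · -- symmetry
      have h2 : H (p.2, Ψ (g p)) = (p.2, p.1) := by
        refine Prod.ext rfl ?_
        show p.2 * (φ (Ψ (g p)) * φ (Ψ (g p))) + Ψ (g p) = p.1
        rw [hφΨ, hΨval, hB2]; ring
      have hmem2 : Hloc.symm (p.2, p.1) ∈ Hloc.source := Hloc.map_target hp2
      have hri2 : H (Hloc.symm (p.2, p.1)) = (p.2, p.1) := by
        have := Hloc.right_inv hp2; rwa [Hcoe] at this
      have hinj := Hloc.injOn
      rw [Hcoe] at hinj
      have heq : (p.2, Ψ (g p)) = Hloc.symm (p.2, p.1) :=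
        hinj hp4 hmem2 (by rw [h2, hri2])
      have hgval : g (p.2, p.1) = Ψ (g p) := by
        simp only [hgdef]; rw [← heq]
      simp only [hfdef, hgval]
      rw [hcΨ, hzkey, hB2]
      field_simp
      ring
  -- boundary values
  have hfv : ∀ᶠ v in 𝓝 (0:ℝ), f (0, v) = z v := by
    have hcont : Tendsto (fun v : ℝ => ((0:ℝ), v)) (𝓝 (0:ℝ)) (𝓝 ((0,0) : ℝ × ℝ)) :=
      (continuous_const.prodMk continuous_id).continuousAt
    filter_upwards [hcont.eventually (Hloc.open_source.mem_nhds hsrc0)] with v hv'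
    have hH0v : H (0, v) = (0, v) := by
      simp only [hHdef]; norm_num
    have hgv : g (0, v) = v := by
      have := Hloc.left_inv hv'
      rw [Hcoe, hH0v] at this
      simp only [hgdef]; rw [this]
    simp only [hfdef, hgv]
    norm_num
  -- assemble
  obtain ⟨U, hUmem, hUsub⟩ := (hU1.and (hU2.and (hU3.and (hU4.and (hU5.and hU6))))).exists_mem
  have hU00 : ((0,0) : ℝ × ℝ) ∈ U := mem_of_mem_nhds hUmem
  refine ⟨g, f, hganal, hfanal, hg00, U, hUmem, ?_, hfv, ?_, ?_, ?_⟩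
  · intro p hp
    obtain ⟨c1, c2, c3, c4, c5, c6⟩ := hUsub p hp
    obtain ⟨e1, e2, e3, e4⟩ := hmain p c1 c2 c3 c4 c5 c6
    refine ⟨e1, by simp only [hfdef], e2, ?_⟩
    rw [e3, e4]
    simp only [hφdef]
    exact inv_mul_cancel₀ c3.2.1.1
  · simp only [hfdef, hg00]
    rw [hc0, hz0]; norm_num
  · obtain ⟨c1, c2, c3, c4, c5, c6⟩ := hUsub (0,0) hU00
    have := (hmain (0,0) c1 c2 c3 c4 c5 c6).2.2.1
    rw [this, hg00, hφ0]
  · obtain ⟨c1, c2, c3, c4, c5, c6⟩ := hUsub (0,0) hU00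
    have := (hmain (0,0) c1 c2 c3 c4 c5 c6).2.2.2
    rw [this, hg00, hc0]
end

section
/- Let h : ℝ × ℝ → ℝ be real-analytic at (0,0) and even in its second argument, i.e. h(x,z) = h(x,−z) for all (x,z) in a neighborhood of (0,0). Then there exists a function g : ℝ × ℝ → ℝ, real-analytic at (0,0), such that h(x,z) = g(x, z²) for all (x,z) in a neighborhood of (0,0). -/
open Finset
open scoped Topology

namespace Stmt2Aux

noncomputable section

def Bcoef (p : FormalMultilinearSeries ℝ (ℝ × ℝ) ℝ) (k : ℕ) (s : Finset (Fin k)) : ℝ :=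
  p k (s.piecewise (fun _ => ((1 : ℝ), (0 : ℝ))) fun _ => ((0 : ℝ), (1 : ℝ)))

def Acoef (p : FormalMultilinearSeries ℝ (ℝ × ℝ) ℝ) (k m : ℕ) : ℝ :=
  ∑ s ∈ powersetCard m (univ : Finset (Fin k)), Bcoef p k s

def piProj (k : ℕ) (s : Finset (Fin k)) :
    ContinuousMultilinearMap ℝ (fun _ : Fin k => ℝ × ℝ) ℝ :=
  (ContinuousMultilinearMap.mkPiAlgebra ℝ (Fin k) ℝ).compContinuousLinearMap
    fun i => if i ∈ s then ContinuousLinearMap.snd ℝ ℝ ℝ else ContinuousLinearMap.fst ℝ ℝ ℝ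

def qser (p : FormalMultilinearSeries ℝ (ℝ × ℝ) ℝ) : FormalMultilinearSeries ℝ (ℝ × ℝ) ℝ :=
  fun k => ∑ s : Finset (Fin k),
    (((k.choose s.card : ℝ))⁻¹ * Acoef p (k + s.card) (k - s.card)) • piProj k s

lemma choose_le_two_pow (n m : ℕ) : n.choose m ≤ 2 ^ n := by
  rcases le_or_gt m n with h | h
  · calc n.choose m ≤ ∑ i ∈ range (n + 1), n.choose i :=
        Finset.single_le_sum (fun i _ => Nat.zero_le _) (mem_range.mpr (by omega))
    _ = 2 ^ n := Nat.sum_range_choose n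
  · simp [Nat.choose_eq_zero_of_lt h]

lemma hasSum_antidiagonal_of_summable {T : ℕ × ℕ → ℝ} (hT : Summable T) :
    HasSum (fun k => ∑ mn ∈ antidiagonal k, T mn) (∑' mn, T mn) := by
  have h1 : HasSum (T ∘ Finset.HasAntidiagonal.sigmaAntidiagonalEquivProd) (∑' mn, T mn) :=
    (Finset.HasAntidiagonal.sigmaAntidiagonalEquivProd.hasSum_iff).mpr hT.hasSum
  refine h1.sigma fun k => ?_
  have : HasSum (fun c : antidiagonal k => T c) (∑ mn ∈ antidiagonal k, T mn) := by
    rw [← Finset.sum_finset_coe]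
    exact hasSum_fintype _
  exact this

lemma summable_of_antidiagonal_le {T : ℕ × ℕ → ℝ} {c : ℕ → ℝ}
    (hc : Summable c) (hle : ∀ k, ∑ mn ∈ antidiagonal k, |T mn| ≤ c k) : Summable T := by
  have habs : Summable ((fun mn => |T mn|) ∘ Finset.HasAntidiagonal.sigmaAntidiagonalEquivProd) := by
    refine (summable_sigma_of_nonneg fun x => abs_nonneg _).mpr
      ⟨fun k => (hasSum_fintype _).summable, ?_⟩
    apply Summable.of_nonneg_of_le (fun k => tsum_nonneg fun x => abs_nonneg _) _ hc
    intro k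
    rw [tsum_fintype]
    calc ∑ x : antidiagonal k, |T (x : ℕ × ℕ)| = ∑ mn ∈ antidiagonal k, |T mn| :=
      Finset.sum_coe_sort (antidiagonal k) (fun mn => |T mn|)
    _ ≤ c k := hle k
  exact (Summable.of_abs (Finset.HasAntidiagonal.sigmaAntidiagonalEquivProd.summable_iff.mp habs))

lemma expand (p : FormalMultilinearSeries ℝ (ℝ × ℝ) ℝ) (k : ℕ) (x z : ℝ) :
    p k (fun _ => (x, z)) = ∑ s : Finset (Fin k), x ^ s.card * z ^ (k - s.card) * Bcoef p k s := by
  have hv : (fun _ : Fin k => ((x, z) : ℝ × ℝ)) =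
      (fun _ : Fin k => x • ((1 : ℝ), (0 : ℝ))) + fun _ : Fin k => z • ((0 : ℝ), (1 : ℝ)) := by
    funext i
    simp [Prod.ext_iff]
  rw [hv]
  have h0 := (p k).toMultilinearMap.map_add_univ
    (fun _ : Fin k => x • ((1 : ℝ), (0 : ℝ))) (fun _ : Fin k => z • ((0 : ℝ), (1 : ℝ)))
  simp only [ContinuousMultilinearMap.coe_coe] at h0
  rw [h0]
  refine Finset.sum_congr rfl fun s _ => ?_
  have h1 : s.piecewise (fun _ : Fin k => x • ((1 : ℝ), (0 : ℝ)))
        (fun _ : Fin k => z • ((0 : ℝ), (1 : ℝ)))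
      = s.piecewise
          (fun i => x • (s.piecewise (fun _ : Fin k => ((1 : ℝ), (0 : ℝ)))
            (fun _ : Fin k => z • ((0 : ℝ), (1 : ℝ)))) i)
          (s.piecewise (fun _ : Fin k => ((1 : ℝ), (0 : ℝ)))
            (fun _ : Fin k => z • ((0 : ℝ), (1 : ℝ)))) := by
    funext i
    by_cases hi : i ∈ s <;> simp [Finset.piecewise, hi]
  rw [h1]
  have h2 := (p k).toMultilinearMap.map_piecewise_smul (fun _ : Fin k => x)
    (s.piecewise (fun _ : Fin k => ((1 : ℝ), (0 : ℝ)))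
      (fun _ : Fin k => z • ((0 : ℝ), (1 : ℝ)))) s
  simp only [ContinuousMultilinearMap.coe_coe] at h2
  rw [h2]
  have h3 : s.piecewise (fun _ : Fin k => ((1 : ℝ), (0 : ℝ)))
        (fun _ : Fin k => z • ((0 : ℝ), (1 : ℝ)))
      = sᶜ.piecewise
          (fun i => z • (s.piecewise (fun _ : Fin k => ((1 : ℝ), (0 : ℝ)))
            (fun _ : Fin k => ((0 : ℝ), (1 : ℝ)))) i)
          (s.piecewise (fun _ : Fin k => ((1 : ℝ), (0 : ℝ)))
            (fun _ : Fin k => ((0 : ℝ), (1 : ℝ)))) := by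
    funext i
    by_cases hi : i ∈ s <;> simp [Finset.piecewise, hi]
  rw [h3]
  have h4 := (p k).toMultilinearMap.map_piecewise_smul (fun _ : Fin k => z)
    (s.piecewise (fun _ : Fin k => ((1 : ℝ), (0 : ℝ)))
      (fun _ : Fin k => ((0 : ℝ), (1 : ℝ)))) sᶜ
  simp only [ContinuousMultilinearMap.coe_coe] at h4
  rw [h4]
  have hcard : sᶜ.card = k - s.card := by
    rw [Finset.card_compl, Fintype.card_fin]
  rw [Finset.prod_const, Finset.prod_const, hcard]
  simp only [smul_eq_mul, Bcoef]
  ring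

lemma expand' (p : FormalMultilinearSeries ℝ (ℝ × ℝ) ℝ) (k : ℕ) (x z : ℝ) :
    p k (fun _ => (x, z)) = ∑ mn ∈ antidiagonal k, Acoef p k mn.1 * x ^ mn.1 * z ^ mn.2 := by
  rw [expand p k x z,
    Finset.Nat.sum_antidiagonal_eq_sum_range_succ (fun m n => Acoef p k m * x ^ m * z ^ n) k]
  have h1 : ∑ s : Finset (Fin k), x ^ s.card * z ^ (k - s.card) * Bcoef p k s
      = ∑ m ∈ range (k + 1), ∑ s ∈ powersetCard m (univ : Finset (Fin k)),
          x ^ s.card * z ^ (k - s.card) * Bcoef p k s := by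
    rw [← Finset.powerset_univ,
      Finset.sum_powerset (univ : Finset (Fin k))
        (fun s => x ^ s.card * z ^ (k - s.card) * Bcoef p k s)]
    simp [card_univ]
  rw [h1]
  refine Finset.sum_congr rfl fun m hm => ?_
  rw [Acoef, Finset.sum_mul, Finset.sum_mul]
  refine Finset.sum_congr rfl fun s hs => ?_
  have hsc : s.card = m := (Finset.mem_powersetCard.mp hs).2
  rw [hsc]
  ring

lemma abs_Bcoef_le (p : FormalMultilinearSeries ℝ (ℝ × ℝ) ℝ) (k : ℕ) (s : Finset (Fin k)) :
    |Bcoef p k s| ≤ ‖p k‖ := by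
  have h := (p k).le_opNorm
    (s.piecewise (fun _ => ((1 : ℝ), (0 : ℝ))) fun _ => ((0 : ℝ), (1 : ℝ)))
  have hn : ∀ i : Fin k,
      ‖(s.piecewise (fun _ => ((1 : ℝ), (0 : ℝ))) fun _ => ((0 : ℝ), (1 : ℝ))) i‖ = 1 := by
    intro i
    by_cases hi : i ∈ s <;> simp [Finset.piecewise, hi, Prod.norm_def]
  rw [← Real.norm_eq_abs, Bcoef]
  calc ‖p k _‖ ≤ ‖p k‖ * ∏ i, ‖(s.piecewise (fun _ => ((1 : ℝ), (0 : ℝ)))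
      fun _ => ((0 : ℝ), (1 : ℝ))) i‖ := h
  _ = ‖p k‖ := by simp [hn]

lemma abs_Acoef_le (p : FormalMultilinearSeries ℝ (ℝ × ℝ) ℝ) (k m : ℕ) :
    |Acoef p k m| ≤ (k.choose m : ℝ) * ‖p k‖ := by
  calc |Acoef p k m| ≤ ∑ s ∈ powersetCard m (univ : Finset (Fin k)), |Bcoef p k s| :=
      Finset.abs_sum_le_sum_abs _ _
  _ ≤ ∑ s ∈ powersetCard m (univ : Finset (Fin k)), ‖p k‖ :=
      Finset.sum_le_sum fun s _ => abs_Bcoef_le p k s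
  _ = (k.choose m : ℝ) * ‖p k‖ := by
      rw [Finset.sum_const, Finset.card_powersetCard, card_univ, Fintype.card_fin,
        nsmul_eq_mul]

lemma piProj_apply (k : ℕ) (s : Finset (Fin k)) (v : Fin k → ℝ × ℝ) :
    piProj k s v = ∏ i, if i ∈ s then (v i).2 else (v i).1 := by
  rw [piProj, ContinuousMultilinearMap.compContinuousLinearMap_apply,
    ContinuousMultilinearMap.mkPiAlgebra_apply]
  refine Finset.prod_congr rfl fun i _ => ?_
  by_cases hi : i ∈ s <;> simp [hi]

lemma piProj_norm (k : ℕ) (s : Finset (Fin k)) : ‖piProj k s‖ ≤ 1 := by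
  refine ContinuousMultilinearMap.opNorm_le_bound zero_le_one fun v => ?_
  rw [piProj_apply, one_mul, Real.norm_eq_abs, Finset.abs_prod]
  refine Finset.prod_le_prod (fun i _ => abs_nonneg _) fun i _ => ?_
  by_cases hi : i ∈ s
  · simpa [hi] using norm_snd_le (v i)
  · simpa [hi] using norm_fst_le (v i)

lemma qser_apply (p : FormalMultilinearSeries ℝ (ℝ × ℝ) ℝ) (k : ℕ) (x y : ℝ) :
    qser p k (fun _ => (x, y)) =
      ∑ mn ∈ antidiagonal k, Acoef p (mn.1 + 2 * mn.2) mn.1 * x ^ mn.1 * y ^ mn.2 := by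
  rw [qser, ContinuousMultilinearMap.sum_apply]
  have hterm : ∀ s : Finset (Fin k),
      ((((k.choose s.card : ℝ))⁻¹ * Acoef p (k + s.card) (k - s.card)) • piProj k s)
        (fun _ => ((x, y) : ℝ × ℝ))
      = ((k.choose s.card : ℝ))⁻¹ * Acoef p (k + s.card) (k - s.card)
          * (x ^ (k - s.card) * y ^ s.card) := by
    intro s
    rw [ContinuousMultilinearMap.smul_apply, piProj_apply, smul_eq_mul]
    congr 1
    calc (∏ i, if i ∈ s then y else x)
        = (∏ i ∈ univ.filter (fun i => i ∈ s), y) * ∏ i ∈ univ.filter (fun i => ¬ i ∈ s), x :=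
          Finset.prod_ite _ _
    _ = y ^ s.card * x ^ (k - s.card) := by
        have e1 : univ.filter (fun i => i ∈ s) = s := by
          ext i; simp
        have e2 : (univ.filter (fun i => ¬ i ∈ s)).card = k - s.card := by
          have h := Finset.card_filter_add_card_filter_not
            (s := (univ : Finset (Fin k))) (p := fun i => i ∈ s)
          rw [e1, card_univ, Fintype.card_fin] at h
          omega
        rw [e1, Finset.prod_const, Finset.prod_const, e2]
    _ = x ^ (k - s.card) * y ^ s.card := mul_comm _ _
  rw [Finset.sum_congr rfl fun s _ => hterm s,
    Finset.Nat.sum_antidiagonal_eq_sum_range_succ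
      (fun m n => Acoef p (m + 2 * n) m * x ^ m * y ^ n) k]
  have hcu : (univ : Finset (Fin k)).card = k := by simp
  calc ∑ s : Finset (Fin k), ((k.choose s.card : ℝ))⁻¹ * Acoef p (k + s.card) (k - s.card)
          * (x ^ (k - s.card) * y ^ s.card)
      = ∑ n ∈ range (k + 1), (k.choose n : ℝ) * (((k.choose n : ℝ))⁻¹ * Acoef p (k + n) (k - n)
          * (x ^ (k - n) * y ^ n)) := by
        rw [← Finset.powerset_univ, Finset.sum_powerset, hcu]
        refine Finset.sum_congr rfl fun n hn => ?_
        rw [Finset.sum_congr rfl (fun s hs => by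
          rw [(Finset.mem_powersetCard.mp hs).2]),
          Finset.sum_const, Finset.card_powersetCard, card_univ, Fintype.card_fin, nsmul_eq_mul]
  _ = ∑ n ∈ range (k + 1), Acoef p (k + n) (k - n) * x ^ (k - n) * y ^ n := by
        refine Finset.sum_congr rfl fun n hn => ?_
        have hnk : n ≤ k := by have := Finset.mem_range.mp hn; omega
        have hpos : ((k.choose n : ℝ)) ≠ 0 := by
          exact_mod_cast (Nat.choose_pos hnk).ne'
        have hx : (k.choose n : ℝ) * ((k.choose n : ℝ)⁻¹ * Acoef p (k + n) (k - n)
            * (x ^ (k - n) * y ^ n))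
            = ((k.choose n : ℝ) * (k.choose n : ℝ)⁻¹)
              * (Acoef p (k + n) (k - n) * x ^ (k - n) * y ^ n) := by ring
        rw [hx, mul_inv_cancel₀ hpos, one_mul]
  _ = ∑ j ∈ range (k + 1), Acoef p (j + 2 * (k - j)) j * x ^ j * y ^ (k - j) := by
        rw [← Finset.sum_range_reflect
          (fun n => Acoef p (k + n) (k - n) * x ^ (k - n) * y ^ n) (k + 1)]
        refine Finset.sum_congr rfl fun j hj => ?_
        have hjk : j ≤ k := by
          have := Finset.mem_range.mp hj; omega
        have h0 : k + 1 - 1 - j = k - j := by omega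
        have h1 : k + (k - j) = j + 2 * (k - j) := by omega
        have h2 : k - (k - j) = j := by omega
        rw [h0, h1, h2]

end

end Stmt2Aux

/-- A function `h : ℝ × ℝ → ℝ` which is real-analytic at `(0,0)` and even in its
second argument is, near `(0,0)`, a real-analytic function of `(x, z^2)`. -/
theorem stmt_2 (h : ℝ × ℝ → ℝ) (hh : AnalyticAt ℝ h ((0, 0) : ℝ × ℝ))
    (heven : ∀ᶠ p : ℝ × ℝ in nhds ((0, 0) : ℝ × ℝ), h p = h (p.1, -p.2)) :
    ∃ g : ℝ × ℝ → ℝ, AnalyticAt ℝ g ((0, 0) : ℝ × ℝ) ∧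
      ∀ᶠ p : ℝ × ℝ in nhds ((0, 0) : ℝ × ℝ), h p = g (p.1, p.2 ^ 2) := by
  classical
  open Stmt2Aux in
  obtain ⟨p, hp⟩ := hh
  obtain ⟨r, hpr⟩ := id hp
  set L : ℝ × ℝ →L[ℝ] ℝ × ℝ :=
    (ContinuousLinearMap.fst ℝ ℝ ℝ).prod (-(ContinuousLinearMap.snd ℝ ℝ ℝ)) with hLdef
  have hLapp : ∀ v : ℝ × ℝ, L v = (v.1, -v.2) := fun v => rfl
  have hLnorm : ∀ v : ℝ × ℝ, ‖L v‖ = ‖v‖ := by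
    intro v; rw [hLapp v]; simp [Prod.norm_def]
  have hLop : ‖L‖ ≤ 1 := by
    refine ContinuousLinearMap.opNorm_le_bound _ zero_le_one fun v => ?_
    rw [hLnorm, one_mul]
  -- power series for the reflected function
  have hq : HasFPowerSeriesOnBall (fun v : ℝ × ℝ => h (v.1, -v.2))
      (p.compContinuousLinearMap L) 0 r := by
    refine ⟨le_trans hpr.r_le (FormalMultilinearSeries.radius_le_of_le fun n => ?_),
      hpr.r_pos, fun {y} hy => ?_⟩
    · calc ‖(p.compContinuousLinearMap L) n‖
          ≤ ‖p n‖ * ∏ _i : Fin n, ‖L‖ :=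
            ContinuousMultilinearMap.norm_compContinuousLinearMap_le (p n) fun _ => L
      _ ≤ ‖p n‖ * 1 := by
          refine mul_le_mul_of_nonneg_left ?_ (norm_nonneg _)
          rw [Finset.prod_const, Finset.card_univ, Fintype.card_fin]
          exact pow_le_one₀ (norm_nonneg _) hLop
      _ = ‖p n‖ := mul_one _
    · have hy' : L y ∈ Metric.eball (0 : ℝ × ℝ) r := by
        rw [mem_emetric_ball_zero_iff] at hy ⊢
        have hnn : ‖L y‖₊ = ‖y‖₊ := by
          ext
          exact hLnorm y
        rw [enorm_eq_nnnorm, hnn, ← enorm_eq_nnnorm]; exact hy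
      have hsum := hpr.hasSum hy'
      rw [show ((0, 0) : ℝ × ℝ) = 0 from rfl, zero_add] at hsum
      rw [zero_add]
      have hterm : (fun n => (p.compContinuousLinearMap L) n fun _ => y)
          = fun n => p n fun _ => L y := by
        funext n
        rw [FormalMultilinearSeries.compContinuousLinearMap_apply]
        rfl
      rw [hterm]
      exact hsum
  have hps : HasFPowerSeriesAt h (p.compContinuousLinearMap L) 0 :=
    hq.hasFPowerSeriesAt.congr (by filter_upwards [heven] with v hv using hv.symm)
  have hdiff : HasFPowerSeriesAt (h - h) (p - p.compContinuousLinearMap L) 0 := hp.sub hps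
  have h0 : HasFPowerSeriesAt (0 : ℝ × ℝ → ℝ) (p - p.compContinuousLinearMap L) 0 := by
    have hzero : h - h = (0 : ℝ × ℝ → ℝ) := by funext v; simp
    rwa [hzero] at hdiff
  have hsym : ∀ (k : ℕ) (x z : ℝ), p k (fun _ => (x, z)) = p k (fun _ => (x, -z)) := by
    intro k x z
    have hz := h0.apply_eq_zero k (x, z)
    have h1 : (p - p.compContinuousLinearMap L) k
        = p k - (p.compContinuousLinearMap L) k := rfl
    rw [h1, ContinuousMultilinearMap.sub_apply] at hz
    have h2 : (p.compContinuousLinearMap L) k (fun _ => ((x, z) : ℝ × ℝ))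
        = p k fun _ => ((x, -z) : ℝ × ℝ) := by
      rw [FormalMultilinearSeries.compContinuousLinearMap_apply]
      rfl
    rw [h2] at hz
    linarith
  -- vanishing of coefficients with odd z-degree
  have hvanish : ∀ m n : ℕ, Odd n → Acoef p (m + n) m = 0 := by
    intro m n hodd
    set k := m + n with hk
    set P : Polynomial ℝ := ∑ j ∈ Finset.range (k + 1),
      Polynomial.C (Acoef p k j) * Polynomial.X ^ (k - j) with hP
    set Q : Polynomial ℝ := ∑ j ∈ Finset.range (k + 1),
      Polynomial.C ((-1 : ℝ) ^ (k - j) * Acoef p k j) * Polynomial.X ^ (k - j) with hQ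
    have hPeval : ∀ z : ℝ, P.eval z = p k fun _ => (1, z) := by
      intro z
      rw [expand' p k 1 z,
        Finset.Nat.sum_antidiagonal_eq_sum_range_succ
          (fun a b => Acoef p k a * 1 ^ a * z ^ b) k, hP]
      rw [Polynomial.eval_finset_sum]
      refine (Finset.sum_congr rfl fun j hj => ?_).symm
      simp
    have hQeval : ∀ z : ℝ, Q.eval z = p k fun _ => (1, -z) := by
      intro z
      rw [expand' p k 1 (-z),
        Finset.Nat.sum_antidiagonal_eq_sum_range_succ
          (fun a b => Acoef p k a * 1 ^ a * (-z) ^ b) k, hQ]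
      rw [Polynomial.eval_finset_sum]
      refine (Finset.sum_congr rfl fun j hj => ?_).symm
      simp only [Polynomial.eval_mul, Polynomial.eval_C, Polynomial.eval_pow,
        Polynomial.eval_X, one_pow, mul_one]
      rw [neg_pow]
      ring
    have hPQ : P = Q := Polynomial.funext fun z => by
      rw [hPeval, hQeval, ← hsym k 1 z]
    have hmk : m ≤ k := by omega
    have hkm : k - m = n := by omega
    have hPc : P.coeff n = Acoef p k m := by
      rw [hP, Polynomial.finset_sum_coeff]
      rw [Finset.sum_eq_single m]
      · rw [Polynomial.coeff_C_mul, Polynomial.coeff_X_pow]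
        simp [hkm]
      · intro j hj hjm
        have hjk : j ≤ k := by have := Finset.mem_range.mp hj; omega
        have hne : n ≠ k - j := by omega
        rw [Polynomial.coeff_C_mul, Polynomial.coeff_X_pow, if_neg hne, mul_zero]
      · intro hm
        exact absurd (Finset.mem_range.mpr (by omega)) hm
    have hQc : Q.coeff n = (-1 : ℝ) ^ n * Acoef p k m := by
      rw [hQ, Polynomial.finset_sum_coeff]
      rw [Finset.sum_eq_single m]
      · rw [Polynomial.coeff_C_mul, Polynomial.coeff_X_pow]
        simp [hkm]
      · intro j hj hjm
        have hjk : j ≤ k := by have := Finset.mem_range.mp hj; omega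
        have hne : n ≠ k - j := by omega
        rw [Polynomial.coeff_C_mul, Polynomial.coeff_X_pow, if_neg hne, mul_zero]
      · intro hm
        exact absurd (Finset.mem_range.mpr (by omega)) hm
    have hA : Acoef p k m = (-1 : ℝ) ^ n * Acoef p k m := by
      conv_lhs => rw [← hPc, hPQ, hQc]
    rw [hodd.neg_one_pow] at hA
    linarith
  -- geometric bounds on the coefficients
  obtain ⟨C, R, hC, hR, hpb⟩ := p.le_mul_pow_of_radius_pos hp.radius_pos
  set M : ℝ := max R 1 with hMdef
  have hM1 : 1 ≤ M := le_max_right _ _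
  have hM0 : 0 < M := lt_of_lt_of_le one_pos hM1
  have hpbM : ∀ k, ‖p k‖ ≤ C * M ^ k := by
    intro k
    refine (hpb k).trans ?_
    have : R ^ k ≤ M ^ k := pow_le_pow_left₀ hR.le (le_max_left _ _) k
    nlinarith
  have hAb : ∀ k n : ℕ, |Acoef p k n| ≤ C * (2 * M) ^ k := by
    intro k n
    calc |Acoef p k n| ≤ (k.choose n : ℝ) * ‖p k‖ := abs_Acoef_le p k n
    _ ≤ 2 ^ k * (C * M ^ k) := by
        refine mul_le_mul ?_ (hpbM k) (norm_nonneg _) (by positivity)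
        exact_mod_cast choose_le_two_pow k n
    _ = C * (2 * M) ^ k := by rw [mul_pow]; ring
  have hqb : ∀ k, ‖qser p k‖ ≤ C * (8 * M ^ 2) ^ k := by
    intro k
    have hcard : ∀ s : Finset (Fin k), s.card ≤ k := by
      intro s
      calc s.card ≤ (univ : Finset (Fin k)).card := Finset.card_le_univ s
      _ = k := by simp
    calc ‖qser p k‖ ≤ ∑ s : Finset (Fin k),
        ‖(((k.choose s.card : ℝ))⁻¹ * Acoef p (k + s.card) (k - s.card)) • piProj k s‖ :=
          norm_sum_le _ _
    _ ≤ ∑ _s : Finset (Fin k), C * (2 * M) ^ (2 * k) := by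
        refine Finset.sum_le_sum fun s _ => ?_
        refine le_trans (ContinuousMultilinearMap.opNorm_smul_le _ _) ?_
        have hb1 : ‖((k.choose s.card : ℝ))⁻¹ * Acoef p (k + s.card) (k - s.card)‖
            ≤ C * (2 * M) ^ (2 * k) := by
          rw [Real.norm_eq_abs, abs_mul]
          have hch : 1 ≤ (k.choose s.card : ℝ) := by
            exact_mod_cast Nat.one_le_iff_ne_zero.mpr (Nat.choose_pos (hcard s)).ne'
          have hinv : |((k.choose s.card : ℝ))⁻¹| ≤ 1 := by
            rw [abs_of_nonneg (by positivity)]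
            exact inv_le_one_of_one_le₀ hch
          calc |((k.choose s.card : ℝ))⁻¹| * |Acoef p (k + s.card) (k - s.card)|
              ≤ 1 * (C * (2 * M) ^ (k + s.card)) :=
                mul_le_mul hinv (hAb _ _) (abs_nonneg _) zero_le_one
          _ = C * (2 * M) ^ (k + s.card) := one_mul _
          _ ≤ C * (2 * M) ^ (2 * k) := by
              refine mul_le_mul_of_nonneg_left ?_ hC.le
              refine pow_le_pow_right₀ (by nlinarith) (by have := hcard s; omega)
        calc ‖((k.choose s.card : ℝ))⁻¹ * Acoef p (k + s.card) (k - s.card)‖ * ‖piProj k s‖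
            ≤ ‖((k.choose s.card : ℝ))⁻¹ * Acoef p (k + s.card) (k - s.card)‖ * 1 :=
              mul_le_mul_of_nonneg_left (piProj_norm k s) (norm_nonneg _)
        _ = ‖((k.choose s.card : ℝ))⁻¹ * Acoef p (k + s.card) (k - s.card)‖ := mul_one _
        _ ≤ C * (2 * M) ^ (2 * k) := hb1
    _ = (2 : ℝ) ^ k * (C * (2 * M) ^ (2 * k)) := by
        rw [Finset.sum_const, Finset.card_univ, nsmul_eq_mul]
        congr 1
        · simp [Fintype.card_finset]
    _ = C * (8 * M ^ 2) ^ k := by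
        rw [pow_mul, ← mul_assoc, mul_comm ((2:ℝ)^k) C, mul_assoc, ← mul_pow]
        congr 2
        ring
  set ρ : NNReal := Real.toNNReal ((8 * M ^ 2)⁻¹) with hρdef
  have hρpos : (0 : ℝ) < (8 * M ^ 2)⁻¹ := by positivity
  have hρcoe : (ρ : ℝ) = (8 * M ^ 2)⁻¹ := Real.coe_toNNReal _ hρpos.le
  have hrad : (ρ : ENNReal) ≤ (qser p).radius := by
    refine FormalMultilinearSeries.le_radius_of_bound _ C fun k => ?_
    calc ‖qser p k‖ * (ρ : ℝ) ^ k ≤ (C * (8 * M ^ 2) ^ k) * ((8 * M ^ 2)⁻¹) ^ k := by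
          rw [hρcoe]
          exact mul_le_mul_of_nonneg_right (hqb k) (by positivity)
    _ = C := by
          rw [mul_assoc, ← mul_pow, mul_inv_cancel₀ (by positivity), one_pow, mul_one]
  have hradpos : (0 : ENNReal) < (qser p).radius :=
    lt_of_lt_of_le (by exact_mod_cast Real.toNNReal_pos.mpr hρpos) hrad
  have hgball := (qser p).hasFPowerSeriesOnBall hradpos
  refine ⟨(qser p).sum, hgball.analyticAt, ?_⟩
  -- choose a small ball
  obtain ⟨ε, hε0, hεr⟩ : ∃ ε : NNReal, 0 < ε ∧ (ε : ENNReal) < r := by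
    rcases ENNReal.lt_iff_exists_nnreal_btwn.mp hpr.r_pos with ⟨ε, h1, h2⟩
    exact ⟨ε, by exact_mod_cast h1, h2⟩
  set δ : ℝ := min (min (ε : ℝ) 1) (min ((2 * M)⁻¹) ((8 * M ^ 2)⁻¹)) with hδdef
  have hε0' : (0 : ℝ) < ε := hε0
  have hδ0 : 0 < δ := by
    refine lt_min (lt_min hε0' one_pos) (lt_min (by positivity) (by positivity))
  have hδε : δ ≤ (ε : ℝ) := (min_le_left _ _).trans (min_le_left _ _)
  have hδ1 : δ ≤ 1 := (min_le_left _ _).trans (min_le_right _ _)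
  have hδM : δ ≤ (2 * M)⁻¹ := (min_le_right _ _).trans (min_le_left _ _)
  have hδM2 : δ ≤ (8 * M ^ 2)⁻¹ := (min_le_right _ _).trans (min_le_right _ _)
  filter_upwards [Metric.ball_mem_nhds ((0, 0) : ℝ × ℝ) hδ0] with v hv
  obtain ⟨x, z⟩ := v
  rw [Metric.mem_ball, show ((0, 0) : ℝ × ℝ) = 0 from rfl, dist_zero_right] at hv
  have hx : |x| < δ := by
    have := norm_fst_le ((x, z) : ℝ × ℝ)
    rw [Real.norm_eq_abs] at this
    exact lt_of_le_of_lt this hv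
  have hz : |z| < δ := by
    have := norm_snd_le ((x, z) : ℝ × ℝ)
    rw [Real.norm_eq_abs] at this
    exact lt_of_le_of_lt this hv
  set T : ℕ × ℕ → ℝ := fun mn => Acoef p (mn.1 + mn.2) mn.1 * x ^ mn.1 * z ^ mn.2 with hTdef
  -- summability of T
  have hTsum : Summable T := by
    refine summable_of_antidiagonal_le
      (c := fun k => C * (M * (|x| + |z|)) ^ k) ?_ ?_
    · refine Summable.mul_left _ (summable_geometric_of_lt_one (by positivity) ?_)
      calc M * (|x| + |z|) < M * (2 * δ) := by
            have h2 : |x| + |z| < 2 * δ := by linarith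
            exact (mul_lt_mul_of_pos_left h2 hM0)
      _ ≤ M * (2 * (2 * M)⁻¹) := by
            refine mul_le_mul_of_nonneg_left ?_ hM0.le
            linarith
      _ = 1 := by field_simp
    · intro k
      calc ∑ mn ∈ Finset.HasAntidiagonal.antidiagonal k, |T mn|
          ≤ ∑ mn ∈ Finset.HasAntidiagonal.antidiagonal k,
              (k.choose mn.1 : ℝ) * ‖p k‖ * |x| ^ mn.1 * |z| ^ mn.2 := by
            refine Finset.sum_le_sum fun mn hmn => ?_
            have hk : mn.1 + mn.2 = k := Finset.HasAntidiagonal.mem_antidiagonal.mp hmn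
            rw [hTdef]
            simp only
            rw [abs_mul, abs_mul, abs_pow, abs_pow]
            refine mul_le_mul_of_nonneg_right
              (mul_le_mul_of_nonneg_right ?_ (by positivity)) (by positivity)
            rw [hk]
            exact abs_Acoef_le p k mn.1
      _ = ‖p k‖ * ∑ mn ∈ Finset.HasAntidiagonal.antidiagonal k,
              |x| ^ mn.1 * |z| ^ mn.2 * (k.choose mn.1 : ℝ) := by
            rw [Finset.mul_sum]
            exact Finset.sum_congr rfl fun mn _ => by ring
      _ = ‖p k‖ * (|x| + |z|) ^ k := by
            congr 1
            rw [add_pow,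
              Finset.Nat.sum_antidiagonal_eq_sum_range_succ
                (fun a b => |x| ^ a * |z| ^ b * (k.choose a : ℝ)) k]
      _ ≤ C * M ^ k * (|x| + |z|) ^ k := by
            refine mul_le_mul_of_nonneg_right (hpbM k) (by positivity)
      _ = C * (M * (|x| + |z|)) ^ k := by rw [mul_pow]; ring
  -- sum identity on the h side
  have hsum1 : HasSum (fun k => p k fun _ => ((x, z) : ℝ × ℝ)) (h (x, z)) := by
    have hmem : ((x, z) : ℝ × ℝ) ∈ Metric.eball (0 : ℝ × ℝ) r := by
      rw [mem_emetric_ball_zero_iff]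
      refine lt_of_lt_of_le ?_ hεr.le
      rw [enorm_eq_nnnorm, ENNReal.coe_lt_coe, ← NNReal.coe_lt_coe, coe_nnnorm]
      calc ‖((x, z) : ℝ × ℝ)‖ < δ := hv
      _ ≤ (ε : ℝ) := hδε
    have := hpr.hasSum hmem
    rwa [show ((0, 0) : ℝ × ℝ) = 0 from rfl, zero_add] at this
  have hsum1' : HasSum (fun k => ∑ mn ∈ Finset.HasAntidiagonal.antidiagonal k, T mn) (h (x, z)) := by
    have heq : (fun k => ∑ mn ∈ Finset.HasAntidiagonal.antidiagonal k, T mn)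
        = fun k => p k fun _ => ((x, z) : ℝ × ℝ) := by
      funext k
      rw [expand' p k x z]
      refine Finset.sum_congr rfl fun mn hmn => ?_
      rw [hTdef]
      simp only
      rw [Finset.HasAntidiagonal.mem_antidiagonal.mp hmn]
    rw [heq]
    exact hsum1
  have hth : h (x, z) = ∑' mn, T mn :=
    hsum1'.unique (hasSum_antidiagonal_of_summable hTsum)
  -- sum identity on the g side
  have hw : ((x, z ^ 2) : ℝ × ℝ) ∈ Metric.eball (0 : ℝ × ℝ) (qser p).radius := by
    refine Metric.eball_subset_eball hrad ?_
    rw [mem_emetric_ball_zero_iff, enorm_eq_nnnorm, ENNReal.coe_lt_coe, ← NNReal.coe_lt_coe, coe_nnnorm, hρcoe]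
    have h1 : |x| < (8 * M ^ 2)⁻¹ := lt_of_lt_of_le hx hδM2
    have h2 : |z ^ 2| < (8 * M ^ 2)⁻¹ := by
      rw [abs_pow]
      calc |z| ^ 2 ≤ |z| * 1 := by nlinarith [abs_nonneg z]
      _ = |z| := mul_one _
      _ < δ := hz
      _ ≤ _ := hδM2
    calc ‖((x, z ^ 2) : ℝ × ℝ)‖ = max |x| |z ^ 2| := by
          rw [Prod.norm_def, Real.norm_eq_abs, Real.norm_eq_abs]
    _ < (8 * M ^ 2)⁻¹ := max_lt h1 h2
  have hsum2 : HasSum (fun k => qser p k fun _ => ((x, z ^ 2) : ℝ × ℝ))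
      ((qser p).sum (x, z ^ 2)) := (qser p).hasSum hw
  set ι : ℕ × ℕ → ℕ × ℕ := fun mn => (mn.1, 2 * mn.2) with hιdef
  have hιinj : Function.Injective ι := by
    intro a b hab
    rw [hιdef] at hab
    simp only [Prod.mk.injEq] at hab
    exact Prod.ext hab.1 (by omega)
  have hT'sum : Summable (T ∘ ι) := hTsum.comp_injective hιinj
  have hsum2' : HasSum (fun k => ∑ mn ∈ Finset.HasAntidiagonal.antidiagonal k, (T ∘ ι) mn)
      ((qser p).sum (x, z ^ 2)) := by
    have heq : (fun k => ∑ mn ∈ Finset.HasAntidiagonal.antidiagonal k, (T ∘ ι) mn)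
        = fun k => qser p k fun _ => ((x, z ^ 2) : ℝ × ℝ) := by
      funext k
      rw [qser_apply p k x (z ^ 2)]
      refine Finset.sum_congr rfl fun mn hmn => ?_
      simp only [Function.comp, hιdef, hTdef]
      rw [pow_mul]
    rw [heq]
    exact hsum2
  have htq : (qser p).sum (x, z ^ 2) = ∑' mn, (T ∘ ι) mn :=
    hsum2'.unique (hasSum_antidiagonal_of_summable hT'sum)
  have htt : ∑' mn, (T ∘ ι) mn = ∑' mn, T mn := by
    refine Function.Injective.tsum_eq hιinj ?_
    intro mn hmn
    by_contra hnr
    apply hmn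
    have hodd : Odd mn.2 := by
      rcases Nat.even_or_odd mn.2 with he | ho
      · exfalso
        apply hnr
        obtain ⟨c, hc⟩ := he
        exact ⟨(mn.1, c), by rw [hιdef]; ext <;> simp <;> omega⟩
      · exact ho
    rw [hTdef]
    simp only
    rw [hvanish mn.1 mn.2 hodd]
    ring
  show h (x, z) = (qser p).sum (x, z ^ 2)
  rw [hth, htq, htt]
end

section
/- Let h : ℝ × ℝ → ℝ be real-analytic at (0,0) and symmetric, i.e. h(u,v) = h(v,u) for all (u,v) in a neighborhood of (0,0). Then there exists a function L : ℝ × ℝ → ℝ, real-analytic at (0,0), such that h(u,v) = L(u + v, u·v) for all (u,v) in a neighborhood of (0,0). -/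
open Filter Finset
open scoped Topology NNReal ENNReal

private lemma card_filter_lt (n a : ℕ) (han : a ≤ n) :
    ((Finset.univ : Finset (Fin n)).filter (fun i : Fin n => (i : ℕ) < a)).card = a := by
  have : ((Finset.univ : Finset (Fin n)).filter (fun i : Fin n => (i : ℕ) < a))
      = Finset.attachFin (Finset.range a)
        (fun m hm => lt_of_lt_of_le (Finset.mem_range.mp hm) han) := by
    ext i
    simp [Finset.mem_attachFin, Finset.mem_filter, Finset.mem_range]
  rw [this, Finset.card_attachFin, Finset.card_range]

/-- One-variable restriction of a power series along a ray: `t ↦ H (t • w)` has the scalar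
power series with coefficients `p k (w, …, w)`. -/
private lemma diag_scale {E : Type*} [NormedAddCommGroup E] [NormedSpace ℝ E]
    {H : E → ℝ} {p : FormalMultilinearSeries ℝ E ℝ} {r : ℝ≥0∞}
    (hp : HasFPowerSeriesOnBall H p 0 r) (w : E) :
    HasFPowerSeriesAt (fun t : ℝ => H (t • w))
      (FormalMultilinearSeries.ofScalars ℝ (fun k => p k (fun _ => w))) 0 := by
  obtain ⟨r₀, hr₀pos, hr₀⟩ := ENNReal.lt_iff_exists_nnreal_btwn.mp hp.r_pos
  obtain ⟨C, hCpos, hC⟩ := p.norm_mul_pow_le_of_lt_radius (lt_of_lt_of_le hr₀ hp.r_le)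
  have hr₀pos'' : 0 < r₀ := by exact_mod_cast hr₀pos
  have hr₀pos' : (0:ℝ) < r₀ := by exact_mod_cast hr₀pos
  set a : ℕ → ℝ := fun k => p k (fun _ => w) with ha_def
  have ha : ∀ k, |a k| ≤ ‖p k‖ * ‖w‖ ^ k := by
    intro k
    calc |a k| ≤ ‖p k‖ * ∏ _i : Fin k, ‖w‖ := (p k).le_opNorm _
    _ = ‖p k‖ * ‖w‖ ^ k := by rw [Finset.prod_const, Finset.card_univ, Fintype.card_fin]
  set ε : ℝ≥0 := r₀ / (‖w‖₊ + 1) with hε_def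
  have hεpos : 0 < ε := div_pos hr₀pos'' (by positivity)
  have hεreal : (ε : ℝ) = (r₀ : ℝ) / (‖w‖ + 1) := by
    rw [hε_def, NNReal.coe_div, NNReal.coe_add, NNReal.coe_one, coe_nnnorm]
  have hεw : ‖w‖ * (ε : ℝ) ≤ r₀ := by
    rw [hεreal, mul_div_assoc', div_le_iff₀ (by positivity)]
    nlinarith [norm_nonneg w, hr₀pos']
  have hbound : ∀ k, ‖FormalMultilinearSeries.ofScalars ℝ a k‖ * (ε : ℝ) ^ k ≤ C := by
    intro k
    rw [FormalMultilinearSeries.ofScalars_norm]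
    calc ‖a k‖ * (ε : ℝ) ^ k ≤ (‖p k‖ * ‖w‖ ^ k) * (ε : ℝ) ^ k := by
          apply mul_le_mul_of_nonneg_right (ha k) (by positivity)
    _ = ‖p k‖ * (‖w‖ * (ε:ℝ)) ^ k := by ring
    _ ≤ ‖p k‖ * (r₀:ℝ) ^ k := by
          apply mul_le_mul_of_nonneg_left _ (norm_nonneg _)
          exact pow_le_pow_left₀ (by positivity) hεw k
    _ ≤ C := hC k
  refine ⟨ε, ?_, ?_, ?_⟩
  · exact (FormalMultilinearSeries.ofScalars ℝ a).le_radius_of_bound C hbound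
  · exact_mod_cast hεpos
  · intro y hy
    rw [mem_emetric_ball_zero_iff] at hy
    have hy' : ‖y‖ < (ε : ℝ) := by exact_mod_cast hy
    have hmem : y • w ∈ Metric.eball (0 : E) r := by
      rw [mem_emetric_ball_zero_iff]
      have h1 : ‖y • w‖ < (r₀ : ℝ) := by
        rw [norm_smul]
        calc ‖y‖ * ‖w‖ ≤ ‖y‖ * (‖w‖ + 1) := by
              apply mul_le_mul_of_nonneg_left (by linarith) (norm_nonneg _)
        _ < (ε:ℝ) * (‖w‖ + 1) := by
              apply mul_lt_mul_of_pos_right hy' (by positivity)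
        _ = (r₀:ℝ) := by rw [hεreal]; field_simp
      calc (‖y • w‖₊ : ℝ≥0∞) < (r₀ : ℝ≥0∞) := by exact_mod_cast h1
      _ < r := hr₀
    have hs := hp.hasSum hmem
    rw [zero_add] at hs
    have key : ∀ n, (FormalMultilinearSeries.ofScalars ℝ a n fun _ => y)
        = p n (fun _ => y • w) := by
      intro n
      rw [FormalMultilinearSeries.ofScalars_apply_eq]
      have := (p n).toMultilinearMap.map_smul_univ (fun _ => y) (fun _ => w)
      simp only [ContinuousMultilinearMap.coe_coe] at this
      rw [this, Finset.prod_const, Finset.card_univ, Fintype.card_fin]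
      simp only [smul_eq_mul, ha_def]
      ring
    simp only [zero_add]
    rw [show (fun n => FormalMultilinearSeries.ofScalars ℝ a n fun _ => y)
        = fun n => p n (fun _ => y • w) from funext key]
    exact hs

/-- If `H (t • w) = H (t • w')` for `t` near `0`, the diagonal coefficients of a power
series of `H` at `0` agree at `w` and `w'`. -/
private lemma diag_eq {E : Type*} [NormedAddCommGroup E] [NormedSpace ℝ E]
    {H : E → ℝ} {p : FormalMultilinearSeries ℝ E ℝ} {r : ℝ≥0∞}
    (hp : HasFPowerSeriesOnBall H p 0 r) {w w' : E}
    (hw : ∀ᶠ t : ℝ in 𝓝 0, H (t • w) = H (t • w')) (k : ℕ) :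
    p k (fun _ => w) = p k (fun _ => w') := by
  have h1 := diag_scale hp w
  have h2 := (diag_scale hp w').congr (EventuallyEq.symm hw)
  have h3 := h2.eq_formalMultilinearSeries h1
  have h4 := FormalMultilinearSeries.ofScalars_series_injective ℝ ℝ h3
  exact (congrFun h4 k).symm

/-- Monomial continuous multilinear map on `ℝ × ℝ`: first `a` slots pick the first
coordinate, the rest the second. -/
private noncomputable def mono (n a : ℕ) :
    ContinuousMultilinearMap ℝ (fun _ : Fin n => ℝ × ℝ) ℝ :=
  (ContinuousMultilinearMap.mkPiAlgebra ℝ (Fin n) ℝ).compContinuousLinearMap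
    (fun i => if (i : ℕ) < a then ContinuousLinearMap.fst ℝ ℝ ℝ
      else ContinuousLinearMap.snd ℝ ℝ ℝ)

private lemma mono_apply (n a : ℕ) (han : a ≤ n) (z : ℝ × ℝ) :
    mono n a (fun _ => z) = z.1 ^ a * z.2 ^ (n - a) := by
  classical
  have h0 : mono n a (fun _ => z)
      = ∏ i : Fin n, (if (i : ℕ) < a then z.1 else z.2) := by
    rw [mono, ContinuousMultilinearMap.compContinuousLinearMap_apply,
      ContinuousMultilinearMap.mkPiAlgebra_apply]
    apply Finset.prod_congr rfl
    intro i _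
    by_cases hi : (i : ℕ) < a <;> simp [hi]
  rw [h0, ← Finset.prod_filter_mul_prod_filter_not Finset.univ (fun i : Fin n => (i : ℕ) < a)]
  have h1 : ∏ i ∈ Finset.univ.filter (fun i : Fin n => (i : ℕ) < a),
      (if (i : ℕ) < a then z.1 else z.2) = z.1 ^ a := by
    rw [Finset.prod_congr rfl (fun i hi => if_pos (Finset.mem_filter.mp hi).2),
      Finset.prod_const, card_filter_lt n a han]
  have h2 : ∏ i ∈ Finset.univ.filter (fun i : Fin n => ¬ (i : ℕ) < a),
      (if (i : ℕ) < a then z.1 else z.2) = z.2 ^ (n - a) := by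
    rw [Finset.prod_congr rfl (fun i hi => if_neg (Finset.mem_filter.mp hi).2),
      Finset.prod_const]
    congr 1
    rw [Finset.filter_not, Finset.card_sdiff_of_subset (Finset.filter_subset _ _),
      card_filter_lt n a han, Finset.card_univ, Fintype.card_fin]
  rw [h1, h2]

private lemma mono_norm (n a : ℕ) : ‖mono n a‖ ≤ 1 := by
  refine le_trans (ContinuousMultilinearMap.norm_compContinuousLinearMap_le _ _) ?_
  rw [ContinuousMultilinearMap.norm_mkPiAlgebra, one_mul]
  apply Finset.prod_le_one
  · intro i _; positivity
  · intro i _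
    by_cases hi : (i : ℕ) < a
    · simp only [hi, if_true]; exact ContinuousLinearMap.norm_fst_le ℝ ℝ ℝ
    · simp only [hi, if_false]; exact ContinuousLinearMap.norm_snd_le ℝ ℝ ℝ

private lemma tsum_preimage_eq_sum {α β : Type*} (f : α → ℝ) (φ : α → β) (b : β)
    (t : Finset α) (ht : ∀ x ∈ t, φ x = b) (h0 : ∀ x, φ x = b → f x ≠ 0 → x ∈ t) :
    ∑' x : (φ ⁻¹' {b} : Set α), f x = ∑ x ∈ t, f x := by
  classical
  rw [_root_.tsum_subtype, tsum_eq_sum (s := t) ?_]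
  · exact Finset.sum_congr rfl fun x hx =>
      Set.indicator_of_mem (by simp [Set.mem_preimage, ht x hx]) f
  · intro x hx
    by_cases hφ : φ x = b
    · by_cases hf : f x = 0
      · by_cases hm : x ∈ (φ ⁻¹' {b} : Set α)
        · rw [Set.indicator_of_mem hm f]; exact hf
        · exact Set.indicator_of_notMem hm f
      · exact absurd (h0 x hφ hf) hx
    · exact Set.indicator_of_notMem (by simp [Set.mem_preimage, hφ]) f

/-- Analytic analogue of Newton's theorem on symmetric polynomials in two
variables: a symmetric function `h : ℝ × ℝ → ℝ` which is real-analytic at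
`(0,0)` is, near `(0,0)`, a real-analytic function of the elementary symmetric
polynomials `u + v` and `u * v`. -/
theorem stmt_3 (h : ℝ × ℝ → ℝ) (hh : AnalyticAt ℝ h ((0, 0) : ℝ × ℝ))
    (hsym : ∀ᶠ p : ℝ × ℝ in nhds ((0, 0) : ℝ × ℝ), h p = h (p.2, p.1)) :
    ∃ L : ℝ × ℝ → ℝ, AnalyticAt ℝ L ((0, 0) : ℝ × ℝ) ∧
      ∀ᶠ p : ℝ × ℝ in nhds ((0, 0) : ℝ × ℝ), h p = L (p.1 + p.2, p.1 * p.2) := by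
  classical
  set Adiv : ℝ × ℝ → ℝ × ℝ := fun z => ((z.1 + z.2) / 2, (z.1 - z.2) / 2) with hAdiv
  set H : ℝ × ℝ → ℝ := fun z => h (Adiv z) with hH
  have hAdiv_an : AnalyticAt ℝ Adiv ((0, 0) : ℝ × ℝ) := by
    apply AnalyticAt.prod
    · exact (analyticAt_fst.add analyticAt_snd).div analyticAt_const (by norm_num)
    · exact (analyticAt_fst.sub analyticAt_snd).div analyticAt_const (by norm_num)
  have hH_an : AnalyticAt ℝ H ((0, 0) : ℝ × ℝ) := by
    have h0 : Adiv ((0, 0) : ℝ × ℝ) = ((0, 0) : ℝ × ℝ) := by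
      simp [hAdiv]
    exact (h0 ▸ hh).comp hAdiv_an
  have hH_an0 : AnalyticAt ℝ H (0 : ℝ × ℝ) := by rwa [Prod.mk_zero_zero] at hH_an
  obtain ⟨p, hpat⟩ := hH_an0
  obtain ⟨r, hp0⟩ := hpat
  -- evenness of the diagonal coefficients in the second variable
  have heven : ∀ (w : ℝ × ℝ) (k : ℕ), p k (fun _ => w) = p k (fun _ => (w.1, -w.2)) := by
    intro w k
    apply diag_eq hp0 _ k
    have hcont : Continuous (fun t : ℝ => Adiv (t • w)) := by
      simp only [hAdiv]
      fun_prop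
    have h00 : Adiv ((0 : ℝ) • w) = ((0, 0) : ℝ × ℝ) := by
      simp [hAdiv]
    have htend : Tendsto (fun t : ℝ => Adiv (t • w)) (𝓝 0) (𝓝 ((0, 0) : ℝ × ℝ)) := by
      have := hcont.tendsto 0
      rwa [h00] at this
    filter_upwards [htend.eventually hsym] with t ht
    have hswap : Adiv (t • (w.1, -w.2)) = ((Adiv (t • w)).2, (Adiv (t • w)).1) := by
      simp only [hAdiv, Prod.smul_mk, Prod.smul_fst, Prod.smul_snd, smul_eq_mul, Prod.mk.injEq]
      constructor <;> ring
    calc H (t • w) = h (Adiv (t • w)) := rfl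
    _ = h ((Adiv (t • w)).2, (Adiv (t • w)).1) := ht
    _ = h (Adiv (t • (w.1, -w.2))) := by rw [hswap]
    _ = H (t • (w.1, -w.2)) := rfl
  -- coefficients
  set e₁ : ℝ × ℝ := (1, 0) with he₁
  set e₂ : ℝ × ℝ := (0, 1) with he₂
  set c : (k : ℕ) → Finset (Fin k) → ℝ :=
    fun k S => p k (S.piecewise (fun _ => e₁) (fun _ => e₂)) with hc_def
  set T : ℕ → ℕ → ℝ := fun a b =>
    ∑ S ∈ (Finset.univ : Finset (Finset (Fin (a + 2 * b)))).filter (fun S => S.card = a),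
      c (a + 2 * b) S with hT_def
  -- multilinear expansion of the diagonal
  have hexp : ∀ (k : ℕ) (z : ℝ × ℝ),
      p k (fun _ => z) = ∑ S : Finset (Fin k), c k S * z.1 ^ S.card * z.2 ^ (k - S.card) := by
    intro k z
    have hz : (fun _ : Fin k => z)
        = (fun _ : Fin k => z.1 • e₁) + (fun _ : Fin k => z.2 • e₂) := by
      funext i
      simp [he₁, he₂, Prod.ext_iff]
    have step1 : p k (fun _ => z)
        = ∑ S : Finset (Fin k),
            p k (S.piecewise (fun _ => z.1 • e₁) (fun _ => z.2 • e₂)) := by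
      rw [hz]
      exact (p k).toMultilinearMap.map_add_univ _ _
    rw [step1]
    apply Finset.sum_congr rfl
    intro S _
    have hpw : S.piecewise (fun _ : Fin k => z.1 • e₁) (fun _ => z.2 • e₂)
        = fun i => (S.piecewise (fun _ => z.1) (fun _ => z.2)) i
            • (S.piecewise (fun _ => e₁) (fun _ => e₂)) i := by
      funext i
      by_cases hi : i ∈ S <;> simp [Finset.piecewise, hi]
    rw [hpw]
    have step2 := (p k).toMultilinearMap.map_smul_univ
      (S.piecewise (fun _ => z.1) (fun _ => z.2)) (S.piecewise (fun _ => e₁) (fun _ => e₂))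
    simp only [ContinuousMultilinearMap.coe_coe] at step2
    rw [step2]
    have hprod : ∏ i : Fin k, (S.piecewise (fun _ => z.1) (fun _ => z.2)) i
        = z.1 ^ S.card * z.2 ^ (k - S.card) := by
      rw [Finset.prod_piecewise]
      rw [Finset.univ_inter, Finset.prod_const, Finset.prod_const]
      congr 1
      rw [← Finset.compl_eq_univ_sdiff, Finset.card_compl, Fintype.card_fin]
    rw [hprod, smul_eq_mul, hc_def]
    ring
  -- norm bounds
  obtain ⟨r₀, hr₀pos, hr₀⟩ := ENNReal.lt_iff_exists_nnreal_btwn.mp hp0.r_pos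
  obtain ⟨C, hCpos, hC⟩ := p.norm_mul_pow_le_of_lt_radius (lt_of_lt_of_le hr₀ hp0.r_le)
  have hρpos : (0 : ℝ) < (r₀ : ℝ) := by exact_mod_cast hr₀pos
  set ρ : ℝ := (r₀ : ℝ) with hρ_def
  have hpk : ∀ k, ‖p k‖ ≤ C / ρ ^ k := by
    intro k
    rw [le_div_iff₀ (by positivity)]
    exact hC k
  have hc_le : ∀ (k) (S : Finset (Fin k)), |c k S| ≤ ‖p k‖ := by
    intro k S
    calc |c k S| ≤ ‖p k‖ * ∏ i : Fin k, ‖S.piecewise (fun _ => e₁) (fun _ => e₂) i‖ :=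
          (p k).le_opNorm _
    _ ≤ ‖p k‖ * 1 := by
        apply mul_le_mul_of_nonneg_left _ (norm_nonneg _)
        apply Finset.prod_le_one (fun i _ => norm_nonneg _)
        intro i _
        by_cases hi : i ∈ S <;>
          simp [Finset.piecewise, hi, he₁, he₂, Prod.norm_def]
    _ = ‖p k‖ := mul_one _
  set δ : ℝ := max (2 / ρ) ((2 / ρ) ^ 2) with hδ_def
  have h2ρpos : (0:ℝ) < 2 / ρ := by positivity
  have hδpos : 0 < δ := lt_max_of_lt_left h2ρpos
  have hT_le : ∀ a b, |T a b| ≤ C * δ ^ (a + b) := by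
    intro a b
    have hcard : ((Finset.univ : Finset (Finset (Fin (a + 2 * b)))).filter
        (fun S => S.card = a)).card ≤ 2 ^ (a + 2 * b) := by
      calc _ ≤ (Finset.univ : Finset (Finset (Fin (a + 2 * b)))).card :=
            Finset.card_filter_le _ _
      _ = 2 ^ (a + 2 * b) := by rw [Finset.card_univ, Fintype.card_finset, Fintype.card_fin]
    have h1 : |T a b| ≤ (2:ℝ) ^ (a + 2*b) * ‖p (a + 2*b)‖ := by
      calc |T a b| ≤ ∑ S ∈ (Finset.univ : Finset (Finset (Fin (a + 2 * b)))).filter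
            (fun S => S.card = a), |c (a + 2 * b) S| := by
            rw [hT_def]; exact Finset.abs_sum_le_sum_abs _ _
      _ ≤ ∑ S ∈ (Finset.univ : Finset (Finset (Fin (a + 2 * b)))).filter
            (fun S => S.card = a), ‖p (a + 2*b)‖ :=
            Finset.sum_le_sum fun S _ => hc_le _ S
      _ = ((Finset.univ : Finset (Finset (Fin (a + 2 * b)))).filter
            (fun S => S.card = a)).card * ‖p (a + 2*b)‖ := by
            rw [Finset.sum_const, nsmul_eq_mul]
      _ ≤ (2:ℝ) ^ (a + 2*b) * ‖p (a + 2*b)‖ := by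
            apply mul_le_mul_of_nonneg_right _ (norm_nonneg _)
            exact_mod_cast hcard
    calc |T a b| ≤ (2:ℝ) ^ (a + 2*b) * ‖p (a + 2*b)‖ := h1
    _ ≤ (2:ℝ) ^ (a + 2*b) * (C / ρ ^ (a + 2*b)) := by
          apply mul_le_mul_of_nonneg_left (hpk _) (by positivity)
    _ = C * (2 / ρ) ^ (a + 2*b) := by rw [div_pow]; ring
    _ = C * ((2 / ρ) ^ a * ((2 / ρ) ^ 2) ^ b) := by rw [pow_add, pow_mul]
    _ ≤ C * (δ ^ a * δ ^ b) := by
          apply mul_le_mul_of_nonneg_left _ (le_of_lt hCpos)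
          apply mul_le_mul
          · exact pow_le_pow_left₀ (le_of_lt h2ρpos) (le_max_left _ _) a
          · exact pow_le_pow_left₀ (by positivity) (le_max_right _ _) b
          · positivity
          · positivity
    _ = C * δ ^ (a + b) := by rw [pow_add]
  -- the new power series
  set q : FormalMultilinearSeries ℝ (ℝ × ℝ) ℝ :=
    fun n => ∑ a ∈ Finset.range (n + 1), T a (n - a) • mono n a with hq_def
  have hq_diag : ∀ (n) (z : ℝ × ℝ), q n (fun _ => z)
      = ∑ a ∈ Finset.range (n + 1), T a (n - a) * z.1 ^ a * z.2 ^ (n - a) := by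
    intro n z
    rw [hq_def]
    rw [ContinuousMultilinearMap.sum_apply]
    apply Finset.sum_congr rfl
    intro a ha
    rw [ContinuousMultilinearMap.smul_apply,
      mono_apply n a (Nat.lt_succ_iff.mp (Finset.mem_range.mp ha)), smul_eq_mul]
    ring
  have hq_norm : ∀ n, ‖q n‖ ≤ ((n:ℝ) + 1) * (C * δ ^ n) := by
    intro n
    calc ‖q n‖ ≤ ∑ a ∈ Finset.range (n + 1), ‖T a (n - a) • mono n a‖ := by
          rw [hq_def]; exact norm_sum_le _ _
    _ ≤ ∑ _a ∈ Finset.range (n + 1), C * δ ^ n := by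
        apply Finset.sum_le_sum
        intro a ha
        refine le_trans (ContinuousMultilinearMap.opNorm_smul_le _ _) ?_
        calc ‖T a (n - a)‖ * ‖mono n a‖ ≤ ‖T a (n - a)‖ * 1 :=
              mul_le_mul_of_nonneg_left (mono_norm n a) (norm_nonneg _)
        _ = |T a (n - a)| := by rw [mul_one, Real.norm_eq_abs]
        _ ≤ C * δ ^ (a + (n - a)) := hT_le a (n - a)
        _ = C * δ ^ n := by
              rw [Nat.add_sub_cancel' (Nat.lt_succ_iff.mp (Finset.mem_range.mp ha))]
    _ = ((n:ℝ) + 1) * (C * δ ^ n) := by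
        rw [Finset.sum_const, Finset.card_range, nsmul_eq_mul]
        push_cast
        ring
  set σ : ℝ≥0 := Real.toNNReal (1 / (2 * δ)) with hσ_def
  have hσpos : 0 < σ := Real.toNNReal_pos.mpr (by positivity)
  have hσreal : (σ : ℝ) = 1 / (2 * δ) := Real.coe_toNNReal _ (by positivity)
  have hradius : (σ : ℝ≥0∞) ≤ q.radius := by
    apply q.le_radius_of_bound (2 * C)
    intro n
    have h2n : ((n:ℝ) + 1) ≤ 2 ^ n * 2 := by
      have hn : (n:ℕ) < 2 ^ n := Nat.lt_two_pow_self
      have hn' : ((n:ℝ) + 1) ≤ (2:ℝ) ^ n := by exact_mod_cast Nat.succ_le_of_lt hn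
      nlinarith [pow_pos (zero_lt_two (α := ℝ)) n]
    have hhalf : δ * (σ:ℝ) = 1 / 2 := by
      rw [hσreal]; field_simp
    calc ‖q n‖ * (σ:ℝ) ^ n ≤ (((n:ℝ) + 1) * (C * δ ^ n)) * (σ:ℝ) ^ n :=
          mul_le_mul_of_nonneg_right (hq_norm n) (by positivity)
    _ = ((n:ℝ) + 1) * C * (δ * (σ:ℝ)) ^ n := by ring
    _ = ((n:ℝ) + 1) * C * (1 / 2) ^ n := by rw [hhalf]
    _ ≤ (2 ^ n * 2) * C * (1 / 2) ^ n := by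
        apply mul_le_mul_of_nonneg_right _ (by positivity)
        exact mul_le_mul_of_nonneg_right h2n (le_of_lt hCpos)
    _ = 2 * C * ((2:ℝ) ^ n * (1 / 2) ^ n) := by ring
    _ = 2 * C := by
        rw [← mul_pow]
        norm_num
  have hqrad_pos : 0 < q.radius := lt_of_lt_of_le (by exact_mod_cast hσpos) hradius
  set g : ℝ × ℝ → ℝ := q.sum with hg_def
  have hgball := q.hasFPowerSeriesOnBall hqrad_pos
  have hg_an : AnalyticAt ℝ g (0 : ℝ × ℝ) := hgball.analyticAt
  set ε : ℝ := ρ / 4 with hε_def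
  have hεpos : 0 < ε := by positivity
  have core : ∀ s d : ℝ, ‖((s, d) : ℝ × ℝ)‖ < ε → H (s, d) = g (s, d ^ 2) := by
    intro s d hsd
    set F : (Σ k : ℕ, Finset (Fin k)) → ℝ := fun x =>
      if Even (x.1 - x.2.card) then c x.1 x.2 * s ^ x.2.card * d ^ (x.1 - x.2.card) else 0
      with hF_def
    set M : ℝ := ‖((s, d) : ℝ × ℝ)‖ with hM_def
    have hM0 : 0 ≤ M := norm_nonneg _
    have hs_le : |s| ≤ M := by
      rw [← Real.norm_eq_abs]; exact norm_fst_le ((s, d) : ℝ × ℝ)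
    have hd_le : |d| ≤ M := by
      rw [← Real.norm_eq_abs]; exact norm_snd_le ((s, d) : ℝ × ℝ)
    have hcard_le : ∀ {k : ℕ} (S : Finset (Fin k)), S.card ≤ k := by
      intro k S
      calc S.card ≤ (Finset.univ : Finset (Fin k)).card := Finset.card_le_univ S
      _ = k := by rw [Finset.card_univ, Fintype.card_fin]
    have hFbound : ∀ x : (Σ k : ℕ, Finset (Fin k)), |F x| ≤ ‖p x.1‖ * M ^ x.1 := by
      rintro ⟨k, S⟩
      rw [hF_def]
      dsimp only
      split_ifs with he
      · calc |c k S * s ^ S.card * d ^ (k - S.card)|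
            = |c k S| * |s| ^ S.card * |d| ^ (k - S.card) := by
              rw [abs_mul, abs_mul, abs_pow, abs_pow]
        _ ≤ ‖p k‖ * M ^ S.card * M ^ (k - S.card) := by
              apply mul_le_mul
              · apply mul_le_mul (hc_le k S) (pow_le_pow_left₀ (abs_nonneg _) hs_le _)
                  (by positivity) (norm_nonneg _)
              · exact pow_le_pow_left₀ (abs_nonneg _) hd_le _
              · positivity
              · positivity
        _ = ‖p k‖ * M ^ k := by
              rw [mul_assoc, ← pow_add, Nat.add_sub_cancel' (hcard_le S)]
      · simp only [abs_zero]
        positivity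
    have hgeom : Summable (fun k : ℕ => C * ((2 * M / ρ) ^ k)) := by
      apply Summable.mul_left
      apply summable_geometric_of_lt_one (by positivity)
      rw [div_lt_one hρpos]
      have hM4 : M < ρ / 4 := by rw [hε_def] at hsd; exact hsd
      linarith
    have hnormsum : Summable (fun x : (Σ k : ℕ, Finset (Fin k)) => |F x|) := by
      rw [summable_sigma_of_nonneg (fun x => abs_nonneg _)]
      constructor
      · intro k; exact Summable.of_finite
      · apply Summable.of_nonneg_of_le (fun k => tsum_nonneg fun S => abs_nonneg _) _ hgeom
        intro k
        calc (∑' S : Finset (Fin k), |F ⟨k, S⟩|)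
            = ∑ S : Finset (Fin k), |F ⟨k, S⟩| := tsum_fintype _
        _ ≤ ∑ _S : Finset (Fin k), ‖p k‖ * M ^ k := Finset.sum_le_sum fun S _ => hFbound ⟨k, S⟩
        _ = (2 : ℝ) ^ k * (‖p k‖ * M ^ k) := by
              rw [Finset.sum_const, Finset.card_univ, Fintype.card_finset, Fintype.card_fin,
                nsmul_eq_mul]
              push_cast
              ring
        _ ≤ (2 : ℝ) ^ k * ((C / ρ ^ k) * M ^ k) := by
              apply mul_le_mul_of_nonneg_left _ (by positivity)
              exact mul_le_mul_of_nonneg_right (hpk k) (by positivity)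
        _ = C * ((2 * M / ρ) ^ k) := by
              have hρne : ρ ≠ 0 := ne_of_gt hρpos
              simp only [div_eq_mul_inv, mul_pow, inv_pow]
              ring
    have hFsum : Summable F := by
      apply Summable.of_norm
      simpa only [Real.norm_eq_abs] using hnormsum
    set A : ℝ := ∑' x, F x with hA_def
    have hA : HasSum F A := hFsum.hasSum
    have per_k : ∀ k : ℕ,
        (∑' x : (Sigma.fst ⁻¹' {k} : Set (Σ k : ℕ, Finset (Fin k))), F x)
          = p k (fun _ => (s, d)) := by
      intro k
      rw [tsum_preimage_eq_sum F Sigma.fst k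
        ((Finset.univ : Finset (Finset (Fin k))).image (fun S => ⟨k, S⟩))
        (by rintro x hx
            obtain ⟨S, _, rfl⟩ := Finset.mem_image.mp hx
            rfl)
        (by rintro ⟨k', S⟩ hk' _
            obtain rfl : k' = k := hk'
            exact Finset.mem_image.mpr ⟨S, Finset.mem_univ _, rfl⟩)]
      rw [Finset.sum_image (by intro S _ S' _ hSS; simpa using hSS)]
      have h2 : (2:ℝ) * (∑ S : Finset (Fin k), F ⟨k, S⟩) = 2 * (p k fun _ => (s, d)) := by
        calc (2:ℝ) * ∑ S : Finset (Fin k), F ⟨k, S⟩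
            = ∑ S : Finset (Fin k), 2 * F ⟨k, S⟩ := by rw [Finset.mul_sum]
        _ = ∑ S : Finset (Fin k), (c k S * s ^ S.card * d ^ (k - S.card)
              + c k S * s ^ S.card * (-d) ^ (k - S.card)) := by
            apply Finset.sum_congr rfl
            intro S _
            rw [hF_def]
            dsimp only
            by_cases he : Even (k - S.card)
            · rw [if_pos he, he.neg_pow]
              ring
            · rw [if_neg he, (Nat.not_even_iff_odd.mp he).neg_pow]
              ring
        _ = (∑ S : Finset (Fin k), c k S * s ^ S.card * d ^ (k - S.card))
              + ∑ S : Finset (Fin k), c k S * s ^ S.card * (-d) ^ (k - S.card) :=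
            Finset.sum_add_distrib
        _ = (p k fun _ => (s, d)) + (p k fun _ => (s, -d)) := by
            rw [← hexp k (s, d), ← hexp k (s, -d)]
        _ = 2 * (p k fun _ => (s, d)) := by
            have hsym_k : (p k fun _ => (s, d)) = p k fun _ => (s, -d) := heven (s, d) k
            rw [← hsym_k]
            ring
      exact mul_left_cancel₀ two_ne_zero h2
    have hk_sum : HasSum (fun k => p k (fun _ => (s, d))) A := by
      have hfib := hA.tsum_fiberwise (Sigma.fst)
      rwa [show (fun k => ∑' x : (Sigma.fst ⁻¹' {k} : Set (Σ k : ℕ, Finset (Fin k))), F x)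
          = fun k => p k (fun _ => (s, d)) from funext per_k] at hfib
    have hmem : ((s, d) : ℝ × ℝ) ∈ Metric.eball (0 : ℝ × ℝ) r := by
      rw [mem_emetric_ball_zero_iff]
      have h1 : ‖((s, d) : ℝ × ℝ)‖ < (r₀ : ℝ) := by
        rw [hε_def] at hsd
        have : (r₀ : ℝ) = ρ := rfl
        linarith
      calc (‖((s, d) : ℝ × ℝ)‖₊ : ℝ≥0∞) < (r₀ : ℝ≥0∞) := by exact_mod_cast h1
      _ < r := hr₀
    have hH_sum := hp0.hasSum hmem
    rw [zero_add] at hH_sum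
    have hAH : A = H (s, d) := hk_sum.unique hH_sum
    set φ : (Σ k : ℕ, Finset (Fin k)) → ℕ × ℕ :=
      fun x => (x.2.card, (x.1 - x.2.card) / 2) with hφ_def
    set G : ℕ × ℕ → ℝ := fun ab => T ab.1 ab.2 * s ^ ab.1 * d ^ (2 * ab.2) with hG_def
    have per_ab : ∀ ab : ℕ × ℕ,
        (∑' x : (φ ⁻¹' {ab} : Set (Σ k : ℕ, Finset (Fin k))), F x) = G ab := by
      rintro ⟨a, b⟩
      rw [tsum_preimage_eq_sum F φ (a, b)
        (((Finset.univ : Finset (Finset (Fin (a + 2 * b)))).filter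
            (fun S => S.card = a)).image (fun S => ⟨a + 2 * b, S⟩))
        (by rintro x hx
            obtain ⟨S, hS, rfl⟩ := Finset.mem_image.mp hx
            have hSa := (Finset.mem_filter.mp hS).2
            rw [hφ_def]
            dsimp only
            rw [hSa]
            rw [Prod.mk.injEq]
            omega)
        (by rintro ⟨k, S⟩ hfib hne
            have hEv : Even (k - S.card) := by
              by_contra hodd
              apply hne
              rw [hF_def]
              dsimp only
              rw [if_neg hodd]
            have h1 : S.card = a := congrArg Prod.fst hfib
            have h2 : (k - S.card) / 2 = b := congrArg Prod.snd hfib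
            have h3 : S.card ≤ k := hcard_le S
            have hk : k = a + 2 * b := by
              obtain ⟨m, hm⟩ := hEv
              omega
            subst hk
            exact Finset.mem_image.mpr
              ⟨S, Finset.mem_filter.mpr ⟨Finset.mem_univ _, h1⟩, rfl⟩)]
      rw [Finset.sum_image (by intro S _ S' _ hSS; simpa using hSS)]
      have hterm : ∀ S ∈ (Finset.univ : Finset (Finset (Fin (a + 2 * b)))).filter
          (fun S => S.card = a),
          F ⟨a + 2 * b, S⟩ = c (a + 2 * b) S * s ^ a * d ^ (2 * b) := by
        intro S hS
        have hSa := (Finset.mem_filter.mp hS).2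
        rw [hF_def]
        dsimp only
        rw [hSa, Nat.add_sub_cancel_left, if_pos (even_two_mul b)]
      rw [Finset.sum_congr rfl hterm, ← Finset.sum_mul, ← Finset.sum_mul]
    have hab_sum : HasSum G A := by
      have hfib := hA.tsum_fiberwise φ
      rwa [show (fun ab => ∑' x : (φ ⁻¹' {ab} : Set (Σ k : ℕ, Finset (Fin k))), F x)
          = G from funext per_ab] at hfib
    set ψ : ℕ × ℕ → ℕ := fun ab => ab.1 + ab.2 with hψ_def
    have per_n : ∀ n : ℕ,
        (∑' x : (ψ ⁻¹' {n} : Set (ℕ × ℕ)), G x) = q n (fun _ => (s, d ^ 2)) := by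
      intro n
      rw [tsum_preimage_eq_sum G ψ n ((Finset.range (n + 1)).image (fun a => (a, n - a)))
        (by intro x hx
            obtain ⟨a, ha, rfl⟩ := Finset.mem_image.mp hx
            have han : a ≤ n := Nat.lt_succ_iff.mp (Finset.mem_range.mp ha)
            rw [hψ_def]
            dsimp only
            omega)
        (by rintro ⟨a, b⟩ hfib _
            have hab : a + b = n := hfib
            apply Finset.mem_image.mpr
            refine ⟨a, Finset.mem_range.mpr (by omega), ?_⟩
            have hnb : n - a = b := by omega
            rw [hnb])]
      rw [Finset.sum_image (by
        intro x _ y _ hxy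
        exact congrArg Prod.fst hxy)]
      rw [hq_diag n (s, d ^ 2)]
      apply Finset.sum_congr rfl
      intro a ha
      rw [hG_def]
      dsimp only
      rw [pow_mul]
    have hn_sum : HasSum (fun n => q n (fun _ => (s, d ^ 2))) A := by
      have hfib := hab_sum.tsum_fiberwise ψ
      rwa [show (fun n => ∑' x : (ψ ⁻¹' {n} : Set (ℕ × ℕ)), G x)
          = fun n => q n (fun _ => (s, d ^ 2)) from funext per_n] at hfib
    have hgA : g (s, d ^ 2) = A := hn_sum.tsum_eq
    rw [hgA, hAH]
  -- final assembly
  refine ⟨fun z => g (z.1, z.1 ^ 2 - 4 * z.2), ?_, ?_⟩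
  · have hinner : AnalyticAt ℝ (fun z : ℝ × ℝ => ((z.1, z.1 ^ 2 - 4 * z.2) : ℝ × ℝ))
        ((0, 0) : ℝ × ℝ) := by
      apply AnalyticAt.prod analyticAt_fst
      exact (analyticAt_fst.pow 2).sub (analyticAt_const.mul analyticAt_snd)
    have h00 : ((fun z : ℝ × ℝ => ((z.1, z.1 ^ 2 - 4 * z.2) : ℝ × ℝ)) ((0, 0) : ℝ × ℝ))
        = (0 : ℝ × ℝ) := by
      simp [Prod.ext_iff]
    have hgan' : AnalyticAt ℝ g ((fun z : ℝ × ℝ => ((z.1, z.1 ^ 2 - 4 * z.2) : ℝ × ℝ))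
        ((0, 0) : ℝ × ℝ)) := by
      rw [h00]
      exact hg_an
    exact AnalyticAt.comp (g := g)
      (f := fun z : ℝ × ℝ => ((z.1, z.1 ^ 2 - 4 * z.2) : ℝ × ℝ))
      (x := ((0, 0) : ℝ × ℝ)) hgan' hinner
  · have hBcont : Continuous (fun z : ℝ × ℝ => ((z.1 + z.2, z.1 - z.2) : ℝ × ℝ)) := by
      fun_prop
    have hB_tendsto : Tendsto (fun z : ℝ × ℝ => ((z.1 + z.2, z.1 - z.2) : ℝ × ℝ))
        (𝓝 ((0, 0) : ℝ × ℝ)) (𝓝 ((0, 0) : ℝ × ℝ)) := by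
      have := hBcont.tendsto ((0, 0) : ℝ × ℝ)
      simpa using this
    have hball : ∀ᶠ w : ℝ × ℝ in 𝓝 ((0, 0) : ℝ × ℝ), ‖w‖ < ε := by
      have hmem := Metric.ball_mem_nhds ((0, 0) : ℝ × ℝ) hεpos
      filter_upwards [hmem] with w hw
      rw [Metric.mem_ball, Prod.mk_zero_zero, dist_zero_right] at hw
      exact hw
    filter_upwards [hB_tendsto.eventually hball] with z hz
    have h1 : h z = H (z.1 + z.2, z.1 - z.2) := by
      rw [hH]
      dsimp only
      congr 1
      rw [hAdiv]
      dsimp only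
      rw [Prod.ext_iff]
      constructor
      · dsimp only; ring
      · dsimp only; ring
    rw [h1, core _ _ hz]
    have h2 : ((z.1 - z.2) ^ 2 : ℝ) = (z.1 + z.2) ^ 2 - 4 * (z.1 * z.2) := by ring
    rw [h2]
end

section
/- Let I ⊆ ℝ be an open interval containing 0 and let z : I → ℝ be twice differentiable on I with z(0) = 0. Define Ψ(t) := −t·(z′(t))² and suppose Ψ maps I into I and that z′(Ψ(t))·z′(t) = 1 for all t ∈ I. Then z(t) − 2t·z′(t) = z(Ψ(t)) for all t ∈ I. -/
/-- The computational core of the symmetry lemma for the Courant–Hilbert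
general solution: if `z` is twice differentiable on an open interval `I`
containing `0`, `z 0 = 0`, and `Ψ t := -t * (z' t)^2` maps `I` into `I`
with `z'(Ψ t) * z' t = 1` on `I`, then `z t - 2 t z' t = z (Ψ t)` on `I`. -/
theorem stmt_4 (a b : ℝ) (ha : a < 0) (hb : 0 < b)
    (z : ℝ → ℝ)
    (hz1 : ∀ t ∈ Set.Ioo a b, DifferentiableAt ℝ z t)
    (hz2 : ∀ t ∈ Set.Ioo a b, DifferentiableAt ℝ (deriv z) t)
    (hz0 : z 0 = 0)
    (Ψ : ℝ → ℝ) (hΨ : ∀ t, Ψ t = -t * (deriv z t) ^ 2)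
    (hmaps : ∀ t ∈ Set.Ioo a b, Ψ t ∈ Set.Ioo a b)
    (hkey : ∀ t ∈ Set.Ioo a b, deriv z (Ψ t) * deriv z t = 1) :
    ∀ t ∈ Set.Ioo a b, z t - 2 * t * deriv z t = z (Ψ t) := by
  set f : ℝ → ℝ := fun t => z t - 2 * t * deriv z t - z (Ψ t) with hf
  have h0mem : (0 : ℝ) ∈ Set.Ioo a b := ⟨ha, hb⟩
  -- f has derivative 0 at each point of Ioo a b
  have hfderiv : ∀ t ∈ Set.Ioo a b, HasDerivAt f 0 t := by
    intro t ht
    have hzt : HasDerivAt z (deriv z t) t := (hz1 t ht).hasDerivAt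
    have hz1t : HasDerivAt (deriv z) (deriv (deriv z) t) t := (hz2 t ht).hasDerivAt
    set z1 := deriv z t
    set z2 := deriv (deriv z) t
    have hΨd : HasDerivAt Ψ (-1 * (deriv z t) ^ 2 + -t * (2 * deriv z t * z2)) t := by
      have h1 : HasDerivAt (fun s : ℝ => -s) (-1) t := (hasDerivAt_id t).neg
      have h2 : HasDerivAt (fun s : ℝ => (deriv z s) ^ 2) (2 * deriv z t * z2) t := by
        have := hz1t.fun_pow 2
        simpa [mul_comm, mul_assoc, mul_left_comm] using this
      have := h1.mul h2
      have heq : (fun s : ℝ => -s * (deriv z s) ^ 2) = Ψ := by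
        funext s; rw [hΨ s]
      exact heq ▸ this.congr_deriv (by ring)
    have hzΨ : HasDerivAt z (deriv z (Ψ t)) (Ψ t) := (hz1 _ (hmaps t ht)).hasDerivAt
    have hcomp : HasDerivAt (fun s => z (Ψ s))
        (deriv z (Ψ t) * (-1 * (deriv z t) ^ 2 + -t * (2 * deriv z t * z2))) t :=
      hzΨ.comp t hΨd
    have hlin : HasDerivAt (fun s => 2 * s * deriv z s) (2 * z1 + 2 * t * z2) t := by
      have h1 : HasDerivAt (fun s : ℝ => 2 * s) 2 t := by
        simpa using (hasDerivAt_id t).const_mul (2 : ℝ)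
      have := h1.fun_mul hz1t
      simpa [mul_comm, mul_assoc, mul_left_comm, two_mul] using this.congr_deriv (by ring)
    have hft : HasDerivAt f
        (deriv z t - (2 * z1 + 2 * t * z2)
          - deriv z (Ψ t) * (-1 * (deriv z t) ^ 2 + -t * (2 * deriv z t * z2))) t :=
      (hzt.sub hlin).sub hcomp
    have hk := hkey t ht
    have : deriv z t - (2 * z1 + 2 * t * z2)
        - deriv z (Ψ t) * (-1 * (deriv z t) ^ 2 + -t * (2 * deriv z t * z2)) = 0 := by
      simp only [z1, z2] at *
      linear_combination (deriv z t + 2 * t * deriv (deriv z) t) * hk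
    rwa [this] at hft
  have hconv : Convex ℝ (Set.Ioo a b) := convex_Ioo a b
  have hdiff : DifferentiableOn ℝ f (Set.Ioo a b) := fun t ht =>
    ((hfderiv t ht).differentiableAt).differentiableWithinAt
  have hconst : ∀ t ∈ Set.Ioo a b, f t = f 0 := by
    intro t ht
    apply hconv.is_const_of_fderivWithin_eq_zero hdiff _ ht h0mem
    intro x hx
    rw [fderivWithin_of_isOpen isOpen_Ioo hx]
    exact (hfderiv x hx).hasFDerivAt.fderiv.trans (by ext; simp)
  intro t ht
  have hΨ0 : Ψ 0 = 0 := by rw [hΨ]; ring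
  have hf0 : f 0 = 0 := by simp [hf, hΨ0, hz0]
  have := hconst t ht
  rw [hf0] at this
  simpa [hf, sub_eq_zero] using this
end

section
/- Let F : ℝ × ℝ → ℝ be real-analytic at (0,0), symmetric in the sense that F(s,t) = F(t,s) for all (s,t) near (0,0), and satisfy F(0,0) = 0 and (∂F/∂s)(0,0) = (∂F/∂t)(0,0) = 1. Then there exist ε > 0 and a function Ψ : ℝ → ℝ, real-analytic at 0, such that Ψ(0) = 0, Ψ′(0) = −1, F(Ψ(t), t) = 0 for all |t| < ε, and Ψ(Ψ(t)) = t for all t in some neighborhood of 0. In particular Ψ is equal to its own inverse and distinct from the identity near 0. -/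
open Filter Topology

/-- The linear equivalence `(x, y) ↦ (x + y, y)` of `ℝ × ℝ`. -/
noncomputable def stmt7Aux : (ℝ × ℝ) ≃L[ℝ] (ℝ × ℝ) :=
{ toFun := fun p => (p.1 + p.2, p.2)
  invFun := fun p => (p.1 - p.2, p.2)
  map_add' := by intro a b; simp [Prod.ext_iff]; ring
  map_smul' := by intro c a; simp [Prod.ext_iff]; ring
  left_inv := by intro p; simp
  right_inv := by intro p; simp
  continuous_toFun := by fun_prop
  continuous_invFun := by fun_prop }

/-- Machine for generating self-inverse analytic functions: a symmetric
function `F` analytic at `(0,0)` with `F(0,0) = 0` and both partial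
derivatives equal to `1` there implicitly defines, via `F(Ψ t, t) = 0`, a
function `Ψ` analytic at `0` with `Ψ 0 = 0`, `Ψ' 0 = -1`, which is a local
involution distinct from the identity near `0`. -/
theorem stmt_7 (F : ℝ × ℝ → ℝ) (hF : AnalyticAt ℝ F ((0, 0) : ℝ × ℝ))
    (hsym : ∀ᶠ p : ℝ × ℝ in nhds ((0, 0) : ℝ × ℝ), F p = F (p.2, p.1))
    (hF0 : F (0, 0) = 0)
    (hFs : fderiv ℝ F ((0, 0) : ℝ × ℝ) (1, 0) = 1)
    (hFt : fderiv ℝ F ((0, 0) : ℝ × ℝ) (0, 1) = 1) :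
    ∃ (ε : ℝ) (Ψ : ℝ → ℝ), 0 < ε ∧
      AnalyticAt ℝ Ψ 0 ∧ Ψ 0 = 0 ∧ deriv Ψ 0 = -1 ∧
      (∀ t : ℝ, |t| < ε → F (Ψ t, t) = 0) ∧
      (∀ᶠ t in nhds (0 : ℝ), Ψ (Ψ t) = t) ∧
      (∀ U ∈ nhds (0 : ℝ), ∃ t ∈ U, Ψ t ≠ t) := by
  set A := stmt7Aux with hA
  -- the map Φ p = (F p, p.2)
  set Φ : ℝ × ℝ → ℝ × ℝ := fun p => (F p, p.2) with hΦdef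
  have hΦa : AnalyticAt ℝ Φ ((0,0) : ℝ × ℝ) := hF.prod analyticAt_snd
  -- derivative of F at 0 applied to (x,y) is x + y
  have hDF : ∀ x y : ℝ, fderiv ℝ F ((0,0) : ℝ × ℝ) (x, y) = x + y := by
    intro x y
    have : (x, y) = x • ((1:ℝ), (0:ℝ)) + y • ((0:ℝ), (1:ℝ)) := by simp
    rw [this, map_add, map_smul, map_smul, hFs, hFt]
    simp
  have hΦs : HasStrictFDerivAt Φ (A : (ℝ × ℝ) →L[ℝ] (ℝ × ℝ)) ((0,0) : ℝ × ℝ) := by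
    have h1 : HasStrictFDerivAt F (fderiv ℝ F ((0,0) : ℝ × ℝ)) ((0,0) : ℝ × ℝ) :=
      hF.hasStrictFDerivAt
    have h2 : HasStrictFDerivAt (fun p : ℝ × ℝ => p.2)
        (ContinuousLinearMap.snd ℝ ℝ ℝ) ((0,0) : ℝ × ℝ) :=
      (ContinuousLinearMap.snd ℝ ℝ ℝ).hasStrictFDerivAt
    have h3 := h1.prodMk h2
    have hEq : (fderiv ℝ F ((0,0) : ℝ × ℝ)).prod (ContinuousLinearMap.snd ℝ ℝ ℝ)
        = (A : (ℝ × ℝ) →L[ℝ] (ℝ × ℝ)) := by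
      refine ContinuousLinearMap.ext fun p => ?_
      show ((fderiv ℝ F ((0,0) : ℝ × ℝ)) p, p.2) = (p.1 + p.2, p.2)
      rw [hDF p.1 p.2]
    exact hEq ▸ h3
  have hfd : fderiv ℝ Φ ((0,0) : ℝ × ℝ) = (A : (ℝ × ℝ) →L[ℝ] (ℝ × ℝ)) :=
    hΦs.hasFDerivAt.fderiv
  set φ := hΦs.toOpenPartialHomeomorph Φ with hφ
  have hφcoe : (φ : ℝ × ℝ → ℝ × ℝ) = Φ := hΦs.toOpenPartialHomeomorph_coe
  have hmem : ((0,0) : ℝ × ℝ) ∈ φ.source := hΦs.mem_toOpenPartialHomeomorph_source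
  have hΦ0 : Φ ((0,0) : ℝ × ℝ) = ((0,0) : ℝ × ℝ) := by
    show (F ((0,0) : ℝ × ℝ), (0:ℝ)) = ((0,0) : ℝ × ℝ)
    rw [hF0]
  have hφ0 : φ ((0,0) : ℝ × ℝ) = ((0,0) : ℝ × ℝ) := by rw [hφcoe]; exact hΦ0
  have htgt : ((0,0) : ℝ × ℝ) ∈ φ.target := by
    have := φ.map_source hmem
    rwa [hφ0] at this
  -- the inverse is analytic
  have hsymm : AnalyticAt ℝ φ.symm ((0,0) : ℝ × ℝ) := by
    have := φ.analyticAt_symm' (i := A) hmem (by rw [hφcoe]; exact hΦa)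
      (by rw [hφcoe]; exact hfd)
    rwa [hφ0] at this
  -- define Ψ
  set Ψ : ℝ → ℝ := fun t => (φ.symm ((0:ℝ), t)).1 with hΨdef
  have hsymm00 : φ.symm ((0,0) : ℝ × ℝ) = ((0,0) : ℝ × ℝ) := by
    have := φ.left_inv hmem
    rwa [hφ0] at this
  have hΨ0 : Ψ 0 = 0 := by
    show (φ.symm (((0:ℝ), (0:ℝ)) : ℝ × ℝ)).1 = 0
    rw [hsymm00]
  -- the auxiliary linear map t ↦ (0, t)
  have hjan : AnalyticAt ℝ (fun t : ℝ => (((0:ℝ), t) : ℝ × ℝ)) 0 :=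
    (analyticAt_const.prod analyticAt_id)
  have hΨa : AnalyticAt ℝ Ψ 0 := by
    have h2 : AnalyticAt ℝ φ.symm (((0:ℝ), (0:ℝ)) : ℝ × ℝ) := hsymm
    have h3 := h2.comp hjan
    have h4 : AnalyticAt ℝ (Prod.fst : ℝ × ℝ → ℝ) ((φ.symm ∘ fun t : ℝ => (((0:ℝ), t) : ℝ × ℝ)) 0) :=
      analyticAt_fst
    exact h4.comp h3
  -- continuity of Ψ at 0
  have hΨc : ContinuousAt Ψ 0 := hΨa.continuousAt
  -- eventually, φ.symm (0, t) = (Ψ t, t) and F (Ψ t, t) = 0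
  have hmain : ∀ᶠ t in 𝓝 (0:ℝ), φ.symm ((0:ℝ), t) = (Ψ t, t) ∧ F (Ψ t, t) = 0 := by
    have htt : Tendsto (fun t : ℝ => (((0:ℝ), t) : ℝ × ℝ)) (𝓝 0) (𝓝 ((0,0) : ℝ × ℝ)) := by
      have : ContinuousAt (fun t : ℝ => (((0:ℝ), t) : ℝ × ℝ)) 0 := by fun_prop
      exact this.tendsto
    have hT : φ.target ∈ 𝓝 ((0,0) : ℝ × ℝ) := φ.open_target.mem_nhds htgt
    filter_upwards [htt hT] with t ht
    have hri := φ.right_inv ht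
    rw [hφcoe] at hri
    -- hri : Φ (φ.symm (0, t)) = (0, t)
    have h2 : (φ.symm ((0:ℝ), t)).2 = t := congrArg Prod.snd hri
    have h1 : F (φ.symm ((0:ℝ), t)) = 0 := congrArg Prod.fst hri
    have heq : φ.symm ((0:ℝ), t) = (Ψ t, t) := by
      rw [hΨdef]; exact Prod.ext rfl h2
    refine ⟨heq, ?_⟩
    rw [← heq]
    simpa using h1
  -- choose ε from hmain
  obtain ⟨ε, hε, hball⟩ := Metric.eventually_nhds_iff_ball.mp hmain
  refine ⟨ε, Ψ, hε, hΨa, hΨ0, ?_, ?_, ?_, ?_⟩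
  · -- deriv Ψ 0 = -1
    have hs : HasStrictFDerivAt φ.symm
        ((A.symm : (ℝ × ℝ) →L[ℝ] (ℝ × ℝ))) ((0,0) : ℝ × ℝ) := by
      have := hΦs.to_localInverse
      rw [hΦ0] at this
      exact this
    have hj : HasFDerivAt (fun t : ℝ => (((0:ℝ), t) : ℝ × ℝ))
        (((0 : ℝ →L[ℝ] ℝ)).prod (ContinuousLinearMap.id ℝ ℝ)) 0 :=
      (((0 : ℝ →L[ℝ] ℝ)).prod (ContinuousLinearMap.id ℝ ℝ)).hasFDerivAt
    have hcomp := hs.hasFDerivAt.comp 0 hj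
    have hc2 := (ContinuousLinearMap.fst ℝ ℝ ℝ).hasFDerivAt.comp 0 hcomp
    have : HasDerivAt Ψ
        (((ContinuousLinearMap.fst ℝ ℝ ℝ).comp
          (((A.symm : (ℝ × ℝ) →L[ℝ] (ℝ × ℝ))).comp
            (((0 : ℝ →L[ℝ] ℝ)).prod (ContinuousLinearMap.id ℝ ℝ)))) 1) 0 :=
      hc2.hasDerivAt
    have hval : (((ContinuousLinearMap.fst ℝ ℝ ℝ).comp
          (((A.symm : (ℝ × ℝ) →L[ℝ] (ℝ × ℝ))).comp
            (((0 : ℝ →L[ℝ] ℝ)).prod (ContinuousLinearMap.id ℝ ℝ)))) 1 : ℝ) = -1 := by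
      show (0:ℝ) - 1 = -1
      norm_num
    rw [hval] at this
    exact this.deriv
  · -- F (Ψ t, t) = 0 for |t| < ε
    intro t ht
    have : t ∈ Metric.ball (0:ℝ) ε := by simpa [Real.dist_eq] using ht
    exact (hball t this).2
  · -- involution
    have hsrc : φ.source ∈ 𝓝 ((0,0) : ℝ × ℝ) := φ.open_source.mem_nhds hmem
    have hc1 : ContinuousAt (fun t : ℝ => ((t, Ψ t) : ℝ × ℝ)) 0 := by fun_prop
    have hc1' : Tendsto (fun t : ℝ => ((t, Ψ t) : ℝ × ℝ)) (𝓝 0) (𝓝 ((0,0) : ℝ × ℝ)) := by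
      have := hc1.tendsto; rwa [hΨ0] at this
    have hc2 : ContinuousAt (fun t : ℝ => ((Ψ t, t) : ℝ × ℝ)) 0 := by fun_prop
    have hc2' : Tendsto (fun t : ℝ => ((Ψ t, t) : ℝ × ℝ)) (𝓝 0) (𝓝 ((0,0) : ℝ × ℝ)) := by
      have := hc2.tendsto; rwa [hΨ0] at this
    have hΨt : Tendsto Ψ (𝓝 0) (𝓝 (0:ℝ)) := by
      have := hΨc.tendsto; rwa [hΨ0] at this
    filter_upwards [hc1' hsrc, hc2' hsym, hΨt hmain, hmain] with t hsrc_t hsym_t hm hm0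
    -- hsym_t : F (Ψ t, t) = F (t, Ψ t); hm : φ.symm (0, Ψ t) = (Ψ (Ψ t), Ψ t) ∧ ...
    have hF1 : F (t, Ψ t) = 0 := by rw [← hsym_t]; exact hm0.2
    have hΦt : Φ ((t, Ψ t) : ℝ × ℝ) = ((0:ℝ), Ψ t) := by
      show (F ((t, Ψ t) : ℝ × ℝ), Ψ t) = ((0:ℝ), Ψ t)
      rw [hF1]
    have hli := φ.left_inv hsrc_t
    rw [hφcoe, hΦt] at hli
    -- hli : φ.symm (0, Ψ t) = (t, Ψ t)
    rw [hm.1] at hli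
    exact (congrArg Prod.fst hli)
  · -- not the identity
    intro U hU
    by_contra h
    push_neg at h
    have heq : Ψ =ᶠ[𝓝 (0:ℝ)] id := by
      filter_upwards [hU] with t ht using h t ht
    have := heq.deriv_eq
    rw [deriv_id] at this
    -- `this : deriv Ψ 0 = 1`, but `deriv Ψ 0 = -1`
    have hd : deriv Ψ 0 = -1 := by
      have hs : HasStrictFDerivAt φ.symm
          ((A.symm : (ℝ × ℝ) →L[ℝ] (ℝ × ℝ))) ((0,0) : ℝ × ℝ) := by
        have := hΦs.to_localInverse
        rw [hΦ0] at this
        exact this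
      have hj : HasFDerivAt (fun t : ℝ => (((0:ℝ), t) : ℝ × ℝ))
          (((0 : ℝ →L[ℝ] ℝ)).prod (ContinuousLinearMap.id ℝ ℝ)) 0 :=
        (((0 : ℝ →L[ℝ] ℝ)).prod (ContinuousLinearMap.id ℝ ℝ)).hasFDerivAt
      have hcomp := hs.hasFDerivAt.comp 0 hj
      have hc2 := (ContinuousLinearMap.fst ℝ ℝ ℝ).hasFDerivAt.comp 0 hcomp
      have hD : HasDerivAt Ψ
          (((ContinuousLinearMap.fst ℝ ℝ ℝ).comp
            (((A.symm : (ℝ × ℝ) →L[ℝ] (ℝ × ℝ))).comp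
              (((0 : ℝ →L[ℝ] ℝ)).prod (ContinuousLinearMap.id ℝ ℝ)))) 1) 0 :=
        hc2.hasDerivAt
      have hval : (((ContinuousLinearMap.fst ℝ ℝ ℝ).comp
            (((A.symm : (ℝ × ℝ) →L[ℝ] (ℝ × ℝ))).comp
              (((0 : ℝ →L[ℝ] ℝ)).prod (ContinuousLinearMap.id ℝ ℝ)))) 1 : ℝ) = -1 := by
        show (0:ℝ) - 1 = -1
        norm_num
      rw [hval] at hD
      exact hD.deriv
    rw [hd] at this
    norm_num at this
end

section
/- Let α ∈ ℝ, α ≠ 0, and define the Born–Infeld function f(u,v) := −(2/α)·(1 − √((1 + αu)(1 + αv))). Then at every point (u,v) ∈ ℝ² with (1 + αu)(1 + αv) > 0, f is differentiable in each argument, with ∂f/∂u = (1 + αv)/√((1+αu)(1+αv)) and ∂f/∂v = (1 + αu)/√((1+αu)(1+αv)), and f satisfies the Courant–Hilbert equation (∂f/∂u)(u,v) · (∂f/∂v)(u,v) = 1. -/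
lemma bi_deriv (α : ℝ) (hα : α ≠ 0) (b : ℝ) (u : ℝ)
    (hpos : 0 < (1 + α * u) * b) :
    HasDerivAt (fun x => -(2 / α) * (1 - Real.sqrt ((1 + α * x) * b)))
      (b / Real.sqrt ((1 + α * u) * b)) u := by
  set S := (1 + α * u) * b with hS
  have hSne : S ≠ 0 := ne_of_gt hpos
  have hg : HasDerivAt (fun x : ℝ => (1 + α * x) * b) (α * b) u := by
    have : HasDerivAt (fun x : ℝ => (1 + α * x)) α u := by
      simpa using ((hasDerivAt_id u).const_mul α).const_add 1
    simpa using this.mul_const b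
  have hsqrt : HasDerivAt (fun x => Real.sqrt ((1 + α * x) * b))
      (α * b / (2 * Real.sqrt S)) u := by
    simpa [Function.comp_def, div_eq_mul_inv, mul_comm, mul_assoc, mul_left_comm] using (Real.hasDerivAt_sqrt hSne).comp u hg
  have h := ((hsqrt.const_sub 1).const_mul (-(2 / α)))
  have hsqrtpos : 0 < Real.sqrt S := Real.sqrt_pos.mpr hpos
  refine h.congr_deriv ?_
  field_simp

/-- The Born–Infeld function `f(u,v) = -(2/α)(1 - √((1+αu)(1+αv)))` is, at
every point with `(1+αu)(1+αv) > 0`, differentiable in each argument with the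
indicated partial derivatives, and satisfies the Courant–Hilbert equation
`(∂f/∂u)(∂f/∂v) = 1`. -/
theorem stmt_9 (α : ℝ) (hα : α ≠ 0) (f : ℝ × ℝ → ℝ)
    (hf : ∀ p : ℝ × ℝ,
      f p = -(2 / α) * (1 - Real.sqrt ((1 + α * p.1) * (1 + α * p.2))))
    (u v : ℝ) (hpos : 0 < (1 + α * u) * (1 + α * v)) :
    HasDerivAt (fun x => f (x, v))
      ((1 + α * v) / Real.sqrt ((1 + α * u) * (1 + α * v))) u ∧
    HasDerivAt (fun y => f (u, y))
      ((1 + α * u) / Real.sqrt ((1 + α * u) * (1 + α * v))) v ∧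
    deriv (fun x => f (x, v)) u * deriv (fun y => f (u, y)) v = 1 := by
  have h1 : HasDerivAt (fun x => f (x, v))
      ((1 + α * v) / Real.sqrt ((1 + α * u) * (1 + α * v))) u := by
    have := bi_deriv α hα (1 + α * v) u hpos
    simpa only [← hf (_, v)] using this
  have h2 : HasDerivAt (fun y => f (u, y))
      ((1 + α * u) / Real.sqrt ((1 + α * u) * (1 + α * v))) v := by
    have hpos' : 0 < (1 + α * v) * (1 + α * u) := by linarith [mul_comm (1 + α * u) (1 + α * v) ▸ hpos]
    have := bi_deriv α hα (1 + α * u) v hpos'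
    have h' : HasDerivAt (fun y => f (u, y))
        ((1 + α * u) / Real.sqrt ((1 + α * v) * (1 + α * u))) v := by
      have heq : ∀ y, f (u, y) = -(2 / α) * (1 - Real.sqrt ((1 + α * y) * (1 + α * u))) := by
        intro y; rw [hf (u, y), mul_comm (1 + α * u)]
      simpa only [← heq] using this
    rwa [mul_comm (1 + α * v)] at h'
  refine ⟨h1, h2, ?_⟩
  rw [h1.deriv, h2.deriv]
  have hs : Real.sqrt ((1 + α * u) * (1 + α * v)) * Real.sqrt ((1 + α * u) * (1 + α * v))
      = (1 + α * u) * (1 + α * v) := Real.mul_self_sqrt hpos.le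
  have hsne : Real.sqrt ((1 + α * u) * (1 + α * v)) ≠ 0 :=
    ne_of_gt (Real.sqrt_pos.mpr hpos)
  field_simp
  rw [Real.sq_sqrt (by rw [mul_comm]; exact hpos.le), div_self (by rw [mul_comm]; exact hpos.ne')]
end

section
/- Let L : ℝ × ℝ → ℝ and E, B ∈ ℝ. Set x := (E² − B²)/2, y := −E²B²/4, u := E²/2 and w := −B²/2, so that x = u + w and y = u·w. Assume L is differentiable at (x,y). Define ℓ(E,B) := L((E² − B²)/2, −E²B²/4) and f(u,w) := L(u + w, u·w). Then (∂ℓ/∂E)(E,B) · (∂ℓ/∂B)(E,B) = −E·B·(∂f/∂u)(u,w)·(∂f/∂w)(u,w). Consequently, if E·B ≠ 0, then ∂ℓ/∂E · ∂ℓ/∂B = −E·B holds if and only if f satisfies the Courant–Hilbert equation (∂f/∂u)(∂f/∂w) = 1 at (E²/2, −B²/2). -/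
/-- Chain-rule identity relating the duality condition
`(∂ℓ/∂E)(∂ℓ/∂B) = -EB` for the Lagrangian `ℓ(E,B) = L((E²-B²)/2, -E²B²/4)` of
four-dimensional nonlinear electrodynamics to the Courant–Hilbert equation for
`f(u,w) = L(u+w, u·w)` at `(u,w) = (E²/2, -B²/2)`. -/
theorem stmt_10 (L : ℝ × ℝ → ℝ) (E B : ℝ)
    (hL : DifferentiableAt ℝ L (((E ^ 2 - B ^ 2) / 2, -(E ^ 2 * B ^ 2) / 4) : ℝ × ℝ))
    (ℓ : ℝ → ℝ → ℝ)
    (hℓ : ∀ E' B' : ℝ, ℓ E' B' = L ((E' ^ 2 - B' ^ 2) / 2, -(E' ^ 2 * B' ^ 2) / 4))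
    (f : ℝ → ℝ → ℝ) (hf : ∀ u w : ℝ, f u w = L (u + w, u * w)) :
    deriv (fun E' => ℓ E' B) E * deriv (fun B' => ℓ E B') B =
      -E * B * (deriv (fun u => f u (-B ^ 2 / 2)) (E ^ 2 / 2) *
        deriv (fun w => f (E ^ 2 / 2) w) (-B ^ 2 / 2)) ∧
    (E * B ≠ 0 →
      (deriv (fun E' => ℓ E' B) E * deriv (fun B' => ℓ E B') B = -E * B ↔
        deriv (fun u => f u (-B ^ 2 / 2)) (E ^ 2 / 2) *
          deriv (fun w => f (E ^ 2 / 2) w) (-B ^ 2 / 2) = 1)) := by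
  set p : ℝ × ℝ := ((E ^ 2 - B ^ 2) / 2, -(E ^ 2 * B ^ 2) / 4) with hpdef
  set D := fderiv ℝ L p with hDdef
  have hD : HasFDerivAt L D p := hL.hasFDerivAt
  -- derivative of ℓ in E
  have hgE : HasDerivAt
      (fun E' : ℝ => (((E' ^ 2 - B ^ 2) / 2, -(E' ^ 2 * B ^ 2) / 4) : ℝ × ℝ))
      ((E, -(E * B ^ 2) / 2)) E := by
    have h1 : HasDerivAt (fun E' : ℝ => (E' ^ 2 - B ^ 2) / 2) E E := by
      have := ((hasDerivAt_pow 2 E).sub_const (B ^ 2)).div_const 2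
      exact this.congr_deriv (by push_cast; ring)
    have h2 : HasDerivAt (fun E' : ℝ => -(E' ^ 2 * B ^ 2) / 4) (-(E * B ^ 2) / 2) E := by
      have := (((hasDerivAt_pow 2 E).mul_const (B ^ 2)).neg).div_const 4
      exact this.congr_deriv (by push_cast; ring)
    exact HasDerivAt.prodMk h1 h2
  have hℓE : HasDerivAt (fun E' => ℓ E' B) (D (E, -(E * B ^ 2) / 2)) E := by
    have : (fun E' => ℓ E' B) =
        fun E' => L ((E' ^ 2 - B ^ 2) / 2, -(E' ^ 2 * B ^ 2) / 4) :=
      funext fun E' => hℓ E' B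
    rw [this]
    exact hD.comp_hasDerivAt E hgE
  -- derivative of ℓ in B
  have hgB : HasDerivAt
      (fun B' : ℝ => (((E ^ 2 - B' ^ 2) / 2, -(E ^ 2 * B' ^ 2) / 4) : ℝ × ℝ))
      ((-B, -(E ^ 2 * B) / 2)) B := by
    have h1 : HasDerivAt (fun B' : ℝ => (E ^ 2 - B' ^ 2) / 2) (-B) B := by
      have := ((hasDerivAt_pow 2 B).const_sub (E ^ 2)).div_const 2
      exact this.congr_deriv (by push_cast; ring)
    have h2 : HasDerivAt (fun B' : ℝ => -(E ^ 2 * B' ^ 2) / 4) (-(E ^ 2 * B) / 2) B := by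
      have := (((hasDerivAt_pow 2 B).const_mul (E ^ 2)).neg).div_const 4
      exact this.congr_deriv (by push_cast; ring)
    exact HasDerivAt.prodMk h1 h2
  have hℓB : HasDerivAt (fun B' => ℓ E B') (D (-B, -(E ^ 2 * B) / 2)) B := by
    have : (fun B' => ℓ E B') =
        fun B' => L ((E ^ 2 - B' ^ 2) / 2, -(E ^ 2 * B' ^ 2) / 4) :=
      funext fun B' => hℓ E B'
    rw [this]
    exact hD.comp_hasDerivAt B hgB
  -- derivatives of f
  have hpu : ((E ^ 2 / 2 + -B ^ 2 / 2, E ^ 2 / 2 * (-B ^ 2 / 2)) : ℝ × ℝ) = p := by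
    rw [hpdef, Prod.ext_iff]; constructor <;> · simp; ring
  have hgu : HasDerivAt (fun u : ℝ => ((u + -B ^ 2 / 2, u * (-B ^ 2 / 2)) : ℝ × ℝ))
      ((1, -B ^ 2 / 2)) (E ^ 2 / 2) := by
    have h2 : HasDerivAt (fun u : ℝ => u * (-B ^ 2 / 2)) (-B ^ 2 / 2) (E ^ 2 / 2) := by
      have := (hasDerivAt_id (E ^ 2 / 2)).mul_const (-B ^ 2 / 2)
      simpa using this
    exact HasDerivAt.prodMk ((hasDerivAt_id _).add_const _) h2
  have hfu : HasDerivAt (fun u => f u (-B ^ 2 / 2)) (D (1, -B ^ 2 / 2)) (E ^ 2 / 2) := by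
    have he : (fun u => f u (-B ^ 2 / 2)) =
        fun u => L (u + -B ^ 2 / 2, u * (-B ^ 2 / 2)) := funext fun u => hf u _
    rw [he]
    refine HasFDerivAt.comp_hasDerivAt _ ?_ hgu
    show HasFDerivAt L D ((E ^ 2 / 2 + -B ^ 2 / 2, E ^ 2 / 2 * (-B ^ 2 / 2)) : ℝ × ℝ)
    rwa [hpu]
  have hgw : HasDerivAt (fun w : ℝ => ((E ^ 2 / 2 + w, E ^ 2 / 2 * w) : ℝ × ℝ))
      ((1, E ^ 2 / 2)) (-B ^ 2 / 2) := by
    have h2 : HasDerivAt (fun w : ℝ => E ^ 2 / 2 * w) (E ^ 2 / 2) (-B ^ 2 / 2) := by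
      have := (hasDerivAt_id (-B ^ 2 / 2)).const_mul (E ^ 2 / 2)
      simpa using this
    exact HasDerivAt.prodMk ((hasDerivAt_id _).const_add _) h2
  have hfw : HasDerivAt (fun w => f (E ^ 2 / 2) w) (D (1, E ^ 2 / 2)) (-B ^ 2 / 2) := by
    have he : (fun w => f (E ^ 2 / 2) w) =
        fun w => L (E ^ 2 / 2 + w, E ^ 2 / 2 * w) := funext fun w => hf _ w
    rw [he]
    refine HasFDerivAt.comp_hasDerivAt _ ?_ hgw
    show HasFDerivAt L D ((E ^ 2 / 2 + -B ^ 2 / 2, E ^ 2 / 2 * (-B ^ 2 / 2)) : ℝ × ℝ)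
    rwa [hpu]
  -- linearity of D
  have hs1 : D (E, -(E * B ^ 2) / 2) = E * D (1, -B ^ 2 / 2) := by
    have h : ((E, -(E * B ^ 2) / 2) : ℝ × ℝ) = E • ((1, -B ^ 2 / 2) : ℝ × ℝ) := by
      rw [Prod.ext_iff]; constructor <;> simp <;> ring
    rw [h, map_smul, smul_eq_mul]
  have hs2 : D (-B, -(E ^ 2 * B) / 2) = -B * D (1, E ^ 2 / 2) := by
    have h : ((-B, -(E ^ 2 * B) / 2) : ℝ × ℝ) = (-B) • ((1, E ^ 2 / 2) : ℝ × ℝ) := by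
      rw [Prod.ext_iff]; constructor <;> simp <;> ring
    rw [h, map_smul, smul_eq_mul]
  rw [hℓE.deriv, hℓB.deriv, hfu.deriv, hfw.deriv, hs1, hs2]
  set a := D (1, -B ^ 2 / 2)
  set b := D (1, E ^ 2 / 2)
  have key : E * a * (-B * b) = -E * B * (a * b) := by ring
  refine ⟨key, fun hEB => ?_⟩
  rw [key]
  have hne : -E * B ≠ 0 := by rw [neg_mul]; exact neg_ne_zero.mpr hEB
  constructor
  · intro h
    exact mul_left_cancel₀ hne (h.trans (mul_one _).symm)
  · intro h
    rw [h, mul_one]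
end

section
/- Let u, v ∈ ℝ, set y₁ := u + v and y₂ := u² + v², let f : ℝ × ℝ → ℝ be differentiable at (y₁, y₂), and define g(u,v) := f(u + v, u² + v²). Writing f₁ := (∂f/∂y₁)(y₁,y₂) and f₂ := (∂f/∂y₂)(y₁,y₂), one has (∂g/∂u)(u,v) · (∂g/∂v)(u,v) = f₁² + 2y₁·f₁·f₂ + 2(y₁² − y₂)·f₂². Consequently, the Dirac–Schwinger equation f₁² + 2y₁f₁f₂ + 2(y₁² − y₂)f₂² = 1 holds at (y₁,y₂) if and only if g satisfies the Courant–Hilbert equation (∂g/∂u)(∂g/∂v) = 1 at (u,v). -/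
/-- Chain-rule identity relating the Dirac–Schwinger equation
`f₁² + 2y₁f₁f₂ + 2(y₁² - y₂)f₂² = 1` for `f(y₁,y₂)` with `y₁ = u + v`,
`y₂ = u² + v²` to the Courant–Hilbert equation for `g(u,v) = f(u+v, u²+v²)`. -/
theorem stmt_11 (u v : ℝ) (f : ℝ × ℝ → ℝ)
    (hf : DifferentiableAt ℝ f ((u + v, u ^ 2 + v ^ 2) : ℝ × ℝ))
    (g : ℝ → ℝ → ℝ) (hg : ∀ a b : ℝ, g a b = f (a + b, a ^ 2 + b ^ 2))
    (y₁ y₂ f₁ f₂ : ℝ) (hy₁ : y₁ = u + v) (hy₂ : y₂ = u ^ 2 + v ^ 2)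
    (hf₁ : f₁ = fderiv ℝ f ((y₁, y₂) : ℝ × ℝ) (1, 0))
    (hf₂ : f₂ = fderiv ℝ f ((y₁, y₂) : ℝ × ℝ) (0, 1)) :
    deriv (fun a => g a v) u * deriv (fun b => g u b) v =
      f₁ ^ 2 + 2 * y₁ * f₁ * f₂ + 2 * (y₁ ^ 2 - y₂) * f₂ ^ 2 ∧
    (f₁ ^ 2 + 2 * y₁ * f₁ * f₂ + 2 * (y₁ ^ 2 - y₂) * f₂ ^ 2 = 1 ↔
      deriv (fun a => g a v) u * deriv (fun b => g u b) v = 1) := by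
  subst hy₁ hy₂
  set p : ℝ × ℝ := (u + v, u ^ 2 + v ^ 2) with hp
  set L := fderiv ℝ f p with hL
  -- derivative in a
  have hcu : HasDerivAt (fun a : ℝ => ((a + v, a ^ 2 + v ^ 2) : ℝ × ℝ)) (1, 2 * u) u := by
    apply HasDerivAt.prodMk
    · simpa using (hasDerivAt_id u).add_const v
    · simpa using ((hasDerivAt_pow 2 u).add_const (v ^ 2))
  have hcv : HasDerivAt (fun b : ℝ => ((u + b, u ^ 2 + b ^ 2) : ℝ × ℝ)) (1, 2 * v) v := by
    apply HasDerivAt.prodMk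
    · simpa using (hasDerivAt_id v).const_add u
    · simpa using ((hasDerivAt_pow 2 v).const_add (u ^ 2))
  have hgu : HasDerivAt (fun a => g a v) (L (1, 2 * u)) u := by
    have := (hf.hasFDerivAt.comp_hasDerivAt u hcu)
    simpa [hg, Function.comp_def, hL] using this
  have hgv : HasDerivAt (fun b => g u b) (L (1, 2 * v)) v := by
    have := (hf.hasFDerivAt.comp_hasDerivAt v hcv)
    simpa [hg, Function.comp_def, hL] using this
  have e1 : L (1, 2 * u) = f₁ + 2 * u * f₂ := by
    have : ((1, 2 * u) : ℝ × ℝ) = (1, 0) + (2 * u) • (0, 1) := by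
      simp [Prod.ext_iff]
    rw [this, map_add, map_smul, hf₁, hf₂]
    simp [hL]
  have e2 : L (1, 2 * v) = f₁ + 2 * v * f₂ := by
    have : ((1, 2 * v) : ℝ × ℝ) = (1, 0) + (2 * v) • (0, 1) := by
      simp [Prod.ext_iff]
    rw [this, map_add, map_smul, hf₁, hf₂]
    simp [hL]
  have key : deriv (fun a => g a v) u * deriv (fun b => g u b) v =
      f₁ ^ 2 + 2 * (u + v) * f₁ * f₂ + 2 * ((u + v) ^ 2 - (u ^ 2 + v ^ 2)) * f₂ ^ 2 := by
    rw [hgu.deriv, hgv.deriv, e1, e2]; ring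
  exact ⟨key, by rw [key]⟩
end

section
/- Let q, v ∈ ℝ, let f : ℝ × ℝ → ℝ be differentiable at (v²/2, −q²/2), and define L(q,v) := f(v²/2, −q²/2). Then q·v + (∂L/∂q)(q,v)·(∂L/∂v)(q,v) = q·v·(1 − (∂f/∂u)(v²/2, −q²/2)·(∂f/∂w)(v²/2, −q²/2)). Consequently, if q·v ≠ 0, the duality condition q·v + (∂L/∂q)(∂L/∂v) = 0 holds if and only if f satisfies the Courant–Hilbert equation (∂f/∂u)(∂f/∂w) = 1 at (v²/2, −q²/2). -/
/-- Chain-rule identity relating the configuration–momentum duality condition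
`q·v + (∂L/∂q)(∂L/∂v) = 0` for `L(q,v) = f(v²/2, -q²/2)` to the
Courant–Hilbert equation for `f` at `(v²/2, -q²/2)`. -/
theorem stmt_12 (q v : ℝ) (f : ℝ × ℝ → ℝ)
    (hf : DifferentiableAt ℝ f ((v ^ 2 / 2, -q ^ 2 / 2) : ℝ × ℝ))
    (L : ℝ → ℝ → ℝ) (hL : ∀ q' v' : ℝ, L q' v' = f (v' ^ 2 / 2, -q' ^ 2 / 2)) :
    q * v + deriv (fun q' => L q' v) q * deriv (fun v' => L q v') v =
      q * v * (1 - fderiv ℝ f ((v ^ 2 / 2, -q ^ 2 / 2) : ℝ × ℝ) (1, 0) *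
        fderiv ℝ f ((v ^ 2 / 2, -q ^ 2 / 2) : ℝ × ℝ) (0, 1)) ∧
    (q * v ≠ 0 →
      (q * v + deriv (fun q' => L q' v) q * deriv (fun v' => L q v') v = 0 ↔
        fderiv ℝ f ((v ^ 2 / 2, -q ^ 2 / 2) : ℝ × ℝ) (1, 0) *
          fderiv ℝ f ((v ^ 2 / 2, -q ^ 2 / 2) : ℝ × ℝ) (0, 1) = 1)) := by
  set p : ℝ × ℝ := (v ^ 2 / 2, -q ^ 2 / 2) with hp
  set A := fderiv ℝ f p with hA
  have hg1 : HasDerivAt (fun q' : ℝ => ((v ^ 2 / 2, -q' ^ 2 / 2) : ℝ × ℝ)) ((0, -q) : ℝ × ℝ) q := by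
    apply HasDerivAt.prodMk
    · simpa using (hasDerivAt_const q (v ^ 2 / 2))
    · have h : HasDerivAt (fun q' : ℝ => q' ^ 2 / 2) q q := by
        simpa using ((hasDerivAt_pow 2 q).div_const 2)
      simpa [neg_div, Pi.neg_def] using h.neg
  have hg2 : HasDerivAt (fun v' : ℝ => ((v' ^ 2 / 2, -q ^ 2 / 2) : ℝ × ℝ)) ((v, 0) : ℝ × ℝ) v := by
    apply HasDerivAt.prodMk
    · simpa using ((hasDerivAt_pow 2 v).div_const 2)
    · simpa using (hasDerivAt_const v (-q ^ 2 / 2))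
  have hd1 : HasDerivAt (fun q' => L q' v) (A ((0, -q) : ℝ × ℝ)) q := by
    have := hf.hasFDerivAt.comp_hasDerivAt q hg1
    simpa [hL, Function.comp_def, ← hA] using this
  have hd2 : HasDerivAt (fun v' => L q v') (A ((v, 0) : ℝ × ℝ)) v := by
    have := hf.hasFDerivAt.comp_hasDerivAt v hg2
    simpa [hL, Function.comp_def, ← hA] using this
  have e1 : A ((0, -q) : ℝ × ℝ) = -q * A ((0, 1) : ℝ × ℝ) := by
    have : ((0, -q) : ℝ × ℝ) = (-q) • ((0, 1) : ℝ × ℝ) := by simp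
    rw [this, map_smul]; simp [smul_eq_mul]
  have e2 : A ((v, 0) : ℝ × ℝ) = v * A ((1, 0) : ℝ × ℝ) := by
    have : ((v, 0) : ℝ × ℝ) = v • ((1, 0) : ℝ × ℝ) := by simp
    rw [this, map_smul]; simp [smul_eq_mul]
  rw [hd1.deriv, hd2.deriv, e1, e2]
  constructor
  · ring
  · intro hqv
    constructor
    · intro h
      have h2 : q * v * (A (1, 0) * A (0, 1) - 1) = 0 := by linear_combination -h
      rcases mul_eq_zero.mp h2 with h' | h'
      · exact absurd h' hqv
      · linarith
    · intro h
      linear_combination (-(q * v)) * h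
end

section
/- Let S ⊆ ℝ × ℝ be a set of pairs (e,g) of (electric, magnetic) charges such that for all (e₁,g₁), (e₂,g₂) ∈ S there exists k ∈ ℤ with e₁·g₂ − e₂·g₁ = 2π·k. Suppose (1, 0) ∈ S and (θ, 2π) ∈ S for some θ ∈ ℝ. Then for every (e,g) ∈ S there exist integers m, n ∈ ℤ such that g = 2π·n and e = m + θ·n. -/
/-- The charge lattice in dimensions `0 mod 4`: if every pair of dyons in `S`
satisfies the DSZ condition `e₁g₂ - e₂g₁ ∈ 2πℤ`, and `S` contains a unit
electric charge `(1,0)` and a minimal monopole `(θ, 2π)`, then every charge in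
`S` is of the form `(m + θn, 2πn)` with `m, n ∈ ℤ`. -/
theorem stmt_15 (S : Set (ℝ × ℝ))
    (hDSZ : ∀ p ∈ S, ∀ q ∈ S, ∃ k : ℤ, p.1 * q.2 - q.1 * p.2 = 2 * Real.pi * k)
    (h1 : ((1 : ℝ), (0 : ℝ)) ∈ S) (θ : ℝ) (hθ : (θ, 2 * Real.pi) ∈ S) :
    ∀ p ∈ S, ∃ m n : ℤ, p.2 = 2 * Real.pi * n ∧ p.1 = m + θ * n := by
  intro p hp
  obtain ⟨n, hn⟩ := hDSZ _ h1 _ hp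
  simp only [mul_zero, one_mul] at hn
  obtain ⟨m, hm⟩ := hDSZ _ hp _ hθ
  simp only at hm
  refine ⟨m, n, by linarith, ?_⟩
  have hπ : (2 : ℝ) * Real.pi ≠ 0 := by positivity
  have : p.1 * (2 * Real.pi) = (m + θ * n) * (2 * Real.pi) := by
    have : p.2 = 2 * Real.pi * n := by linarith
    rw [this] at hm; ring_nf at hm ⊢; nlinarith [hm]
  exact mul_right_cancel₀ hπ this
end

section
/- Let S ⊆ ℝ × ℝ be a set of pairs (e,g) of (electric, magnetic) charges such that for all (e₁,g₁), (e₂,g₂) ∈ S — including the case of a pair taken twice — there exists k ∈ ℤ with e₁·g₂ + e₂·g₁ = 2π·k. Suppose (1, 0) ∈ S and (θ, 2π) ∈ S for some θ ∈ ℝ. Then 2θ ∈ ℤ, and for every (e,g) ∈ S there exists n ∈ ℤ such that g = 2π·n and e + θ·n ∈ ℤ. -/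
/-- The charge lattice in dimensions `2 mod 4`: if every pair of dyons in `S`
(including a dyon paired with itself) satisfies the DSZ condition
`e₁g₂ + e₂g₁ ∈ 2πℤ`, and `S` contains a unit electric charge `(1,0)` and a
minimal monopole `(θ, 2π)`, then `2θ ∈ ℤ` and every charge in `S` has
`g = 2πn` with `e + θn ∈ ℤ`. -/
theorem stmt_16 (S : Set (ℝ × ℝ))
    (hDSZ : ∀ p ∈ S, ∀ q ∈ S, ∃ k : ℤ, p.1 * q.2 + q.1 * p.2 = 2 * Real.pi * k)
    (h1 : ((1 : ℝ), (0 : ℝ)) ∈ S) (θ : ℝ) (hθ : (θ, 2 * Real.pi) ∈ S) :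
    (∃ k : ℤ, 2 * θ = k) ∧
    ∀ p ∈ S, ∃ n : ℤ, p.2 = 2 * Real.pi * n ∧ ∃ m : ℤ, p.1 + θ * n = m := by
  have hpi := Real.pi_ne_zero
  constructor
  · obtain ⟨k, hk⟩ := hDSZ _ hθ _ hθ
    refine ⟨k, mul_left_cancel₀ (show (2 * Real.pi : ℝ) ≠ 0 by positivity) ?_⟩
    simp only at hk; linear_combination hk
  · intro p hp
    obtain ⟨n, hn⟩ := hDSZ _ h1 _ hp
    simp only at hn
    have hg : p.2 = 2 * Real.pi * n := by linarith
    refine ⟨n, hg, ?_⟩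
    obtain ⟨m, hm⟩ := hDSZ _ hθ _ hp
    simp only at hm
    rw [hg] at hm
    refine ⟨m, ?_⟩
    have : 2 * Real.pi * (p.1 + θ * n) = 2 * Real.pi * m := by ring_nf; ring_nf at hm; linarith
    have h2 : (2 * Real.pi : ℝ) ≠ 0 := by positivity
    exact mul_left_cancel₀ h2 this
end

section
/- Let S ⊆ ℝ × ℝ be a set of pairs (e,g) such that for all (e₁,g₁), (e₂,g₂) ∈ S there exists k ∈ ℤ with e₁·g₂ − e₂·g₁ = 2π·k. If every (e,g) ∈ S satisfies e² + g² < 2π, then e₁·g₂ = e₂·g₁ for all (e₁,g₁), (e₂,g₂) ∈ S; that is, all charge vectors in S are pairwise parallel. -/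
/-- Schwinger's small-charge observation: if all dyons in `S` satisfy the DSZ
condition `e₁g₂ - e₂g₁ ∈ 2πℤ` and all charges are small in the
duality-invariant sense `e² + g² < 2π`, then all charge vectors in `S` are
pairwise parallel: `e₁g₂ = e₂g₁`. -/
theorem stmt_17 (S : Set (ℝ × ℝ))
    (hDSZ : ∀ p ∈ S, ∀ q ∈ S, ∃ k : ℤ, p.1 * q.2 - q.1 * p.2 = 2 * Real.pi * k)
    (hsmall : ∀ p ∈ S, p.1 ^ 2 + p.2 ^ 2 < 2 * Real.pi) :
    ∀ p ∈ S, ∀ q ∈ S, p.1 * q.2 = q.1 * p.2 := by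
  intro p hp q hq
  obtain ⟨k, hk⟩ := hDSZ p hp q hq
  have hp2 := hsmall p hp
  have hq2 := hsmall q hq
  have hpi : (0:ℝ) < Real.pi := Real.pi_pos
  have hpn : 0 ≤ p.1 ^ 2 + p.2 ^ 2 := by positivity
  have hqn : 0 ≤ q.1 ^ 2 + q.2 ^ 2 := by positivity
  have hCS : (p.1 * q.2 - q.1 * p.2) ^ 2 ≤ (p.1 ^ 2 + p.2 ^ 2) * (q.1 ^ 2 + q.2 ^ 2) := by
    nlinarith [sq_nonneg (p.1 * q.1 + p.2 * q.2)]
  have hlt : (2 * Real.pi * k) ^ 2 < (2 * Real.pi) ^ 2 := by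
    rw [← hk]
    calc (p.1 * q.2 - q.1 * p.2) ^ 2 ≤ (p.1 ^ 2 + p.2 ^ 2) * (q.1 ^ 2 + q.2 ^ 2) := hCS
      _ < (2 * Real.pi) * (2 * Real.pi) := by
          apply mul_lt_mul' (le_of_lt hp2) hq2 hqn (by linarith)
      _ = (2 * Real.pi) ^ 2 := by ring
  have hk2 : (k:ℝ) ^ 2 < 1 := by
    have h2 : (0:ℝ) < (2 * Real.pi) ^ 2 := by positivity
    nlinarith
  have : k = 0 := by
    by_contra h
    have : (1:ℝ) ≤ (k:ℝ) ^ 2 := by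
      have : (1:ℤ) ≤ k ^ 2 := by nlinarith [sq_nonneg k, Int.one_le_abs h, sq_abs k]
      exact_mod_cast this
    linarith
  rw [this] at hk
  push_cast at hk
  linarith
end

section
/- Let ι be a type and let R := MvPolynomial (ι × ℕ) ℝ be the algebra of polynomials over ℝ in the variables X_{(i,l)} indexed by pairs (i,l) ∈ ι × ℕ. Let ∂₀ : R → R be the ℝ-linear derivation determined on generators by ∂₀(X_{(i,l)}) = X_{(i,l+1)}. Then the kernel of ∂₀ consists exactly of the constant polynomials: for every P ∈ R, if ∂₀(P) = 0 then P = C(c) for some c ∈ ℝ. -/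
open MvPolynomial

/-- Coefficient of a partial derivative at `s - single v 1` over ℝ. -/
lemma coeff_pderiv_sub {ι : Type*} (v : ι × ℕ) (P : MvPolynomial (ι × ℕ) ℝ)
    (s : (ι × ℕ) →₀ ℕ) (hs : s ∈ P.support) (hv : v ∈ s.support) :
    MvPolynomial.coeff (s - Finsupp.single v 1) (MvPolynomial.pderiv v P)
      = P.coeff s * (s v : ℝ) := by
  classical
  conv_lhs => rw [P.as_sum, map_sum]
  rw [MvPolynomial.coeff_sum]
  rw [Finset.sum_eq_single s]
  · rw [pderiv_monomial, coeff_monomial, if_pos rfl]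
  · intro s' hs' hne
    rw [pderiv_monomial, coeff_monomial]
    split_ifs with h
    · rcases Nat.eq_zero_or_pos (s' v) with h0 | h0
      · simp [h0]
      · exfalso
        apply hne
        have h1 : Finsupp.single v 1 ≤ s' := by
          rwa [Finsupp.single_le_iff]
        have h2 : Finsupp.single v 1 ≤ s := by
          rw [Finsupp.single_le_iff]
          exact Finsupp.mem_support_iff.mp hv |>.bot_lt
        calc s' = s' - Finsupp.single v 1 + Finsupp.single v 1 :=
              (tsub_add_cancel_of_le h1).symm
          _ = s - Finsupp.single v 1 + Finsupp.single v 1 := by rw [h]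
          _ = s := tsub_add_cancel_of_le h2
    · rfl
  · intro h; exact absurd hs h

/-- Key monomial computation. -/
lemma pderiv_mkDerivation_monomial {ι : Type*} (i : ι) (l : ℕ)
    (s : (ι × ℕ) →₀ ℕ) (r : ℝ) (hs : s (i, l + 1) = 0) :
    MvPolynomial.pderiv (i, l + 1)
      (MvPolynomial.mkDerivation ℝ (fun w : ι × ℕ => (MvPolynomial.X (w.1, w.2 + 1) :
        MvPolynomial (ι × ℕ) ℝ)) (MvPolynomial.monomial s r))
      = MvPolynomial.pderiv (i, l) (MvPolynomial.monomial s r) := by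
  classical
  rw [mkDerivation_monomial, Derivation.map_smul, Finsupp.sum, map_sum]
  have hterm : ∀ w ∈ s.support,
      MvPolynomial.pderiv (i, l + 1)
        (MvPolynomial.monomial (s - Finsupp.single w 1) ((s w : ℝ)) •
          (MvPolynomial.X (w.1, w.2 + 1) : MvPolynomial (ι × ℕ) ℝ))
        = if w = (i, l) then
            MvPolynomial.monomial (s - Finsupp.single (i, l) 1) ((s w : ℝ)) else 0 := by
    intro w hw
    rw [smul_eq_mul, pderiv_mul, pderiv_monomial]
    have h1 : (s - Finsupp.single w 1 : (ι × ℕ) →₀ ℕ) (i, l + 1) = 0 := by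
      rw [Finsupp.tsub_apply, hs]; simp
    rw [h1]
    simp only [Nat.cast_zero, mul_zero, MvPolynomial.monomial_zero, zero_mul, zero_add]
    split_ifs with h
    · subst h
      rw [pderiv_X_self, mul_one]
    · have hne : (w.1, w.2 + 1) ≠ (i, l + 1) := by
        intro hcontra
        apply h
        have h1 := congrArg Prod.fst hcontra
        have h2 := congrArg Prod.snd hcontra
        simp only at h1 h2
        exact Prod.ext h1 (Nat.succ_injective h2)
      rw [pderiv_X_of_ne hne, mul_zero]
  rw [Finset.sum_congr rfl hterm, Finset.sum_ite_eq' s.support (i, l)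
    (fun w => MvPolynomial.monomial (s - Finsupp.single (i, l) 1) ((s w : ℝ)))]
  rw [pderiv_monomial]
  split_ifs with h
  · rw [smul_monomial, smul_eq_mul]
  · have h0 : s (i, l) = 0 := Finsupp.notMem_support_iff.mp h
    rw [h0]
    simp

/-- Algebraic Poincaré lemma in form degree zero for the jet space of ghosts:
the ℝ-linear derivation `∂₀` on the polynomial ring in the variables
`X (i, l)` (`i : ι`, `l : ℕ`) determined by `∂₀ (X (i, l)) = X (i, l + 1)`
(the total time derivative) has kernel consisting exactly of the constant
polynomials. -/
theorem stmt_19 (ι : Type*)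
    (D : Derivation ℝ (MvPolynomial (ι × ℕ) ℝ) (MvPolynomial (ι × ℕ) ℝ))
    (hD : ∀ (i : ι) (l : ℕ),
      D (MvPolynomial.X (i, l)) = MvPolynomial.X (i, l + 1)) :
    ∀ P : MvPolynomial (ι × ℕ) ℝ, D P = 0 → ∃ c : ℝ, P = MvPolynomial.C c := by
  classical
  have hDeq : D = MvPolynomial.mkDerivation ℝ
      (fun w : ι × ℕ => (MvPolynomial.X (w.1, w.2 + 1) : MvPolynomial (ι × ℕ) ℝ)) := by
    apply MvPolynomial.derivation_ext
    rintro ⟨i, l⟩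
    rw [hD, mkDerivation_X]
  intro P hP
  have hvars : P.vars = ∅ := by
    by_contra hne
    obtain ⟨v, hv⟩ := Finset.nonempty_of_ne_empty hne
    have hT : (P.vars.image Prod.snd).Nonempty := ⟨v.2, Finset.mem_image_of_mem _ hv⟩
    obtain ⟨w, hw, hwl⟩ := Finset.mem_image.mp ((P.vars.image Prod.snd).max'_mem hT)
    have hmax : ∀ u ∈ P.vars, u.2 ≤ w.2 := fun u hu =>
      hwl ▸ Finset.le_max' _ _ (Finset.mem_image_of_mem _ hu)
    have hkey : MvPolynomial.pderiv (w.1, w.2 + 1) (D P) = MvPolynomial.pderiv (w.1, w.2) P := by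
      rw [hDeq]
      conv_lhs => rw [P.as_sum, map_sum, map_sum]
      conv_rhs => rw [P.as_sum, map_sum]
      refine Finset.sum_congr rfl fun s hsP => ?_
      refine pderiv_mkDerivation_monomial w.1 w.2 s _ ?_
      by_contra h0
      have hmem : (w.1, w.2 + 1) ∈ P.vars :=
        (MvPolynomial.mem_vars _).mpr ⟨s, hsP, Finsupp.mem_support_iff.mpr h0⟩
      have := hmax _ hmem
      omega
    rw [hP, map_zero] at hkey
    obtain ⟨s, hsP, hvs⟩ := (MvPolynomial.mem_vars w).mp hw
    have hc := coeff_pderiv_sub w P s hsP hvs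
    rw [← Prod.mk.eta (p := w), ← hkey, MvPolynomial.coeff_zero] at hc
    have h1 : P.coeff s ≠ 0 := MvPolynomial.mem_support_iff.mp hsP
    have h2 : s w ≠ 0 := Finsupp.mem_support_iff.mp hvs
    have h3 : P.coeff s * ((s w : ℕ) : ℝ) ≠ 0 :=
      mul_ne_zero h1 (Nat.cast_ne_zero.mpr h2)
    rw [Prod.mk.eta] at hc
    exact h3 hc.symm
  refine ⟨P.coeff 0, ?_⟩
  apply MvPolynomial.ext
  intro m
  rw [MvPolynomial.coeff_C]
  split_ifs with h
  · rw [← h]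
  · rw [← MvPolynomial.notMem_support_iff]
    intro hm
    have hm0 : m ≠ 0 := fun h0 => h (h0 ▸ rfl)
    obtain ⟨u, hu⟩ := Finsupp.support_nonempty_iff.mpr hm0
    have : u ∈ P.vars := (MvPolynomial.mem_vars u).mpr ⟨m, hm, hu⟩
    rw [hvars] at this
    exact absurd this (Finset.notMem_empty u)
end
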